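/- arXiv:1504.00972 — 6 statements merged into one kernel-verified Lean document; each statement's English description precedes it below -/
import Mathlib

section
/- Let m ≥ 1 and k ≥ 0 be integers with N = m + k, and let a, β ∈ ℝ. Define w(y,z) = (−log‖y‖)^a ‖y‖^β on the open set Ω = {(y,z) ∈ ℝ^m × ℝ^k : 0 < ‖y‖ < 1}. Then w is smooth on Ω and its Laplacian on ℝ^N satisfies, at every point of Ω, Δw = ‖y‖^{β−2} (−log‖y‖)^a [ β(β + m − 2) − a(2β + m − 2)(−log‖y‖)^{−1} + a(a−1)(−log‖y‖)^{−2} ]. -/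
open MeasureTheory

/-- The Euclidean norm of the first `m` coordinates of `x ∈ ℝ^N`, i.e. `‖y‖`
where `x = (y,z)` with `y ∈ ℝ^m` and `z ∈ ℝ^{N-m}`. -/
noncomputable def rhoY (m : ℕ) {N : ℕ} (x : EuclideanSpace ℝ (Fin N)) : ℝ :=
  Real.sqrt (∑ i : Fin N, if (i : ℕ) < m then x i ^ 2 else 0)

/-- The Euclidean Laplacian of `f : ℝ^n → ℝ` at `x`, as the trace of the second
derivative over the standard orthonormal basis. -/
noncomputable def lap {n : ℕ} (f : EuclideanSpace ℝ (Fin n) → ℝ)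
    (x : EuclideanSpace ℝ (Fin n)) : ℝ :=
  ∑ i : Fin n, iteratedFDeriv ℝ 2 f x ![EuclideanSpace.single i 1, EuclideanSpace.single i 1]

noncomputable section LapAux

/-- `w` as a function of `s = ‖y‖²`, with `c = β/2`. -/
def Gf (a c : ℝ) : ℝ → ℝ := fun s => (-Real.log s / 2) ^ a * s ^ c

def G1f (a c : ℝ) : ℝ → ℝ := fun s =>
  s ^ (c - 1) * (c * (-Real.log s / 2) ^ a - (a / 2) * (-Real.log s / 2) ^ (a - 1))

def G2f (a c : ℝ) : ℝ → ℝ := fun s =>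
  s ^ (c - 2) * (c * (c - 1) * (-Real.log s / 2) ^ a
    - ((a / 2) * (c - 1) + a * c / 2) * (-Real.log s / 2) ^ (a - 1)
    + (a * (a - 1) / 4) * (-Real.log s / 2) ^ (a - 2))

theorem hasDerivAt_Gf (a c : ℝ) {s : ℝ} (hs : 0 < s) (hs1 : s < 1) :
    HasDerivAt (Gf a c) (G1f a c s) s := by
  have hT : 0 < -Real.log s / 2 := by
    have := Real.log_neg hs hs1; linarith
  have hTd : HasDerivAt (fun s : ℝ => -Real.log s / 2) (-(1 / s) / 2) s := by
    simpa using ((Real.hasDerivAt_log hs.ne').neg).div_const 2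
  have h1 : HasDerivAt (fun s : ℝ => (-Real.log s / 2) ^ a)
      (-(1 / s) / 2 * a * (-Real.log s / 2) ^ (a - 1)) s :=
    hTd.rpow_const (Or.inl hT.ne')
  have h2 : HasDerivAt (fun s : ℝ => s ^ c) (c * s ^ (c - 1)) s :=
    Real.hasDerivAt_rpow_const (Or.inl hs.ne')
  have := h1.mul h2
  refine this.congr_deriv (Eq.symm ?_)
  have hsc : s ^ c = s ^ (c - 1) * s := by
    rw [← Real.rpow_add_one hs.ne']; ring_nf
  rw [G1f, hsc]
  field_simp
  ring

theorem hasDerivAt_G1f (a c : ℝ) {s : ℝ} (hs : 0 < s) (hs1 : s < 1) :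
    HasDerivAt (G1f a c) (G2f a c s) s := by
  have hT : 0 < -Real.log s / 2 := by
    have := Real.log_neg hs hs1; linarith
  have hTd : HasDerivAt (fun s : ℝ => -Real.log s / 2) (-(1 / s) / 2) s := by
    simpa using ((Real.hasDerivAt_log hs.ne').neg).div_const 2
  have h1 : HasDerivAt (fun s : ℝ => s ^ (c - 1)) ((c - 1) * s ^ (c - 1 - 1)) s :=
    Real.hasDerivAt_rpow_const (Or.inl hs.ne')
  have h2 : HasDerivAt (fun s : ℝ =>
      c * (-Real.log s / 2) ^ a - (a / 2) * (-Real.log s / 2) ^ (a - 1))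
      (c * (-(1 / s) / 2 * a * (-Real.log s / 2) ^ (a - 1))
        - (a / 2) * (-(1 / s) / 2 * (a - 1) * (-Real.log s / 2) ^ (a - 1 - 1))) s :=
    ((hTd.rpow_const (Or.inl hT.ne')).const_mul c).sub
      ((hTd.rpow_const (Or.inl hT.ne')).const_mul (a / 2))
  have := h1.mul h2
  refine this.congr_deriv (Eq.symm ?_)
  have hsc : s ^ (c - 1) = s ^ (c - 1 - 1) * s := by
    rw [← Real.rpow_add_one hs.ne']; ring_nf
  have he : c - 1 - 1 = c - 2 := by ring
  have he2 : a - 1 - 1 = a - 2 := by ring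
  rw [G2f, hsc, he, he2]
  field_simp
  ring

/-- Combination of the radial derivatives into the final Laplacian formula. -/
theorem combineG (a β mR : ℝ) {s : ℝ} (hs : 0 < s) (hs1 : s < 1) :
    4 * s * G2f a (β / 2) s + 2 * mR * G1f a (β / 2) s =
      Real.sqrt s ^ (β - 2) * (-Real.log (Real.sqrt s)) ^ a *
        (β * (β + mR - 2) - a * (2 * β + mR - 2) * (-Real.log (Real.sqrt s))⁻¹
          + a * (a - 1) * ((-Real.log (Real.sqrt s))⁻¹) ^ 2) := by
  have hT : 0 < -Real.log s / 2 := by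
    have := Real.log_neg hs hs1; linarith
  set t := -Real.log s / 2 with htdef
  have hlog : -Real.log (Real.sqrt s) = t := by
    rw [Real.log_sqrt hs.le]; rw [htdef]; ring
  have hr : Real.sqrt s ^ (β - 2) = s ^ (β / 2 - 1) := by
    rw [Real.sqrt_eq_rpow, ← Real.rpow_mul hs.le]
    congr 1; ring
  have ht1 : t ^ (a - 1) = t ^ a * t⁻¹ := by
    rw [Real.rpow_sub hT, Real.rpow_one, div_eq_mul_inv]
  have ht2 : t ^ (a - 2) = t ^ a * (t⁻¹) ^ 2 := by
    rw [show a - 2 = a - (2:ℝ) by norm_num, Real.rpow_sub hT]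
    rw [show ((2:ℝ) : ℝ) = ((2:ℕ) : ℝ) by norm_num, Real.rpow_natCast]
    field_simp
  have hss : s ^ (β / 2 - 1) = s ^ (β / 2 - 2) * s := by
    rw [← Real.rpow_add_one hs.ne']; ring_nf
  rw [G1f, G2f, hlog, hr, ht1, ht2, hss]
  ring

end LapAux

section MultiDim

variable {N : ℕ}

/-- Sum of squares of the first `m` coordinates. -/
noncomputable def Sfun (m N : ℕ) (x : EuclideanSpace ℝ (Fin N)) : ℝ :=
  ∑ i : Fin N, if (i : ℕ) < m then x i ^ 2 else 0

theorem rhoY_eq_sqrt (m : ℕ) (x : EuclideanSpace ℝ (Fin N)) :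
    rhoY m x = Real.sqrt (Sfun m N x) := rfl

theorem Sfun_nonneg (m : ℕ) (x : EuclideanSpace ℝ (Fin N)) : 0 ≤ Sfun m N x :=
  Finset.sum_nonneg fun i _ => by split_ifs <;> positivity

theorem Sfun_contDiff (m : ℕ) : ContDiff ℝ (⊤ : ℕ∞) (Sfun m N) :=
  ContDiff.sum fun i _ => by
    split_ifs
    · exact (EuclideanSpace.proj (𝕜 := ℝ) i).contDiff.pow 2
    · exact contDiff_const

/-- The (constant) second derivative bilinear map of `Sfun`, as a function of the
first slot: `Bmap x v = ∑_{i<m} 2 xᵢ vᵢ`. -/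
noncomputable def Bmap (m N : ℕ) :
    EuclideanSpace ℝ (Fin N) →L[ℝ] EuclideanSpace ℝ (Fin N) →L[ℝ] ℝ :=
  ∑ i ∈ Finset.univ.filter (fun i : Fin N => (i : ℕ) < m),
    (2 : ℝ) • (EuclideanSpace.proj i).smulRight (EuclideanSpace.proj (𝕜 := ℝ) i)

theorem Bmap_apply (m : ℕ) (x v : EuclideanSpace ℝ (Fin N)) :
    Bmap m N x v = ∑ i ∈ Finset.univ.filter (fun i : Fin N => (i : ℕ) < m),
      2 * (x i * v i) := by
  simp [Bmap, ContinuousLinearMap.sum_apply, smul_eq_mul, mul_assoc]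

theorem Bmap_single (m : ℕ) (x : EuclideanSpace ℝ (Fin N)) (i : Fin N) :
    Bmap m N x (EuclideanSpace.single i 1) = if (i : ℕ) < m then 2 * x i else 0 := by
  rw [Bmap_apply]
  have h : ∀ j ∈ Finset.univ.filter (fun i : Fin N => (i : ℕ) < m),
      2 * (x j * (EuclideanSpace.single i (1:ℝ)) j) = if j = i then 2 * x j else 0 := by
    intro j _
    rw [EuclideanSpace.single_apply]
    split_ifs with h1
    · ring
    · ring
  rw [Finset.sum_congr rfl h, Finset.sum_ite_eq' _ i (fun j => 2 * x j)]
  simp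

theorem hasFDerivAt_Sfun (m : ℕ) (x : EuclideanSpace ℝ (Fin N)) :
    HasFDerivAt (Sfun m N) (Bmap m N x) x := by
  have hsq : ∀ i : Fin N, HasFDerivAt (fun y : EuclideanSpace ℝ (Fin N) => y i ^ 2)
      ((2 * x i) • (EuclideanSpace.proj (𝕜 := ℝ) i)) x := by
    intro i
    have h := ((EuclideanSpace.proj (𝕜 := ℝ) i).hasFDerivAt (x := x)).mul
      ((EuclideanSpace.proj (𝕜 := ℝ) i).hasFDerivAt (x := x))
    have h2 : (fun y : EuclideanSpace ℝ (Fin N) => y i ^ 2)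
        = fun y => (EuclideanSpace.proj (𝕜 := ℝ) i) y * (EuclideanSpace.proj (𝕜 := ℝ) i) y := by
      funext y; simp [sq]
    rw [h2]
    refine h.congr_fderiv (Eq.symm ?_)
    refine ContinuousLinearMap.ext fun v => ?_
    simp only [ContinuousLinearMap.add_apply, ContinuousLinearMap.smul_apply, smul_eq_mul]
    have e1 : (EuclideanSpace.proj (𝕜 := ℝ) i) v = v i := rfl
    have e2 : (EuclideanSpace.proj (𝕜 := ℝ) i) x = x i := rfl
    rw [e1, e2]
    ring
  have hsum : HasFDerivAt
      (fun y : EuclideanSpace ℝ (Fin N) =>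
        ∑ i ∈ Finset.univ.filter (fun i : Fin N => (i : ℕ) < m), y i ^ 2)
      (∑ i ∈ Finset.univ.filter (fun i : Fin N => (i : ℕ) < m),
        (2 * x i) • (EuclideanSpace.proj (𝕜 := ℝ) i)) x :=
    HasFDerivAt.fun_sum fun i _ => hsq i
  have hfun : Sfun m N = fun y : EuclideanSpace ℝ (Fin N) =>
      ∑ i ∈ Finset.univ.filter (fun i : Fin N => (i : ℕ) < m), y i ^ 2 := by
    funext y; exact (Finset.sum_filter _ _).symm
  have hBeq : Bmap m N x = ∑ i ∈ Finset.univ.filter (fun i : Fin N => (i : ℕ) < m),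
      (2 * x i) • (EuclideanSpace.proj (𝕜 := ℝ) i) := by
    ext v
    simp [Bmap, ContinuousLinearMap.sum_apply, smul_eq_mul]
    exact Finset.sum_congr rfl fun j _ => by ring
  rw [hfun, hBeq]
  exact hsum

theorem count_lt (m : ℕ) (hmN : m ≤ N) :
    ∑ i : Fin N, (if (i : ℕ) < m then (1 : ℝ) else 0) = m := by
  rw [Fin.sum_univ_eq_sum_range (fun i => if i < m then (1 : ℝ) else 0) N]
  rw [← Finset.sum_subset (Finset.range_subset_range.2 hmN)
    (fun x _ hx => by rw [if_neg]; simpa [Finset.mem_range, not_lt] using hx)]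
  rw [Finset.sum_congr rfl (fun i hi => if_pos (Finset.mem_range.1 hi))]
  simp

end MultiDim

/-- Exact Laplacian of `w(y,z) = (-log ‖y‖)^a ‖y‖^β` on `{0 < ‖y‖ < 1} ⊆ ℝ^m × ℝ^k`:
`Δw = ‖y‖^{β-2} (-log ‖y‖)^a [β(β+m-2) - a(2β+m-2)(-log ‖y‖)⁻¹ + a(a-1)(-log ‖y‖)⁻²]`. -/
theorem laplacian_log_power (m k N : ℕ) (hm : 1 ≤ m) (hN : N = m + k) (a β : ℝ) :
    ContDiffOn ℝ (⊤ : ℕ∞)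
      (fun x : EuclideanSpace ℝ (Fin N) => (-Real.log (rhoY m x)) ^ a * rhoY m x ^ β)
      {x : EuclideanSpace ℝ (Fin N) | 0 < rhoY m x ∧ rhoY m x < 1} ∧
    ∀ x : EuclideanSpace ℝ (Fin N), 0 < rhoY m x → rhoY m x < 1 →
      lap (fun x : EuclideanSpace ℝ (Fin N) =>
          (-Real.log (rhoY m x)) ^ a * rhoY m x ^ β) x =
        rhoY m x ^ (β - 2) * (-Real.log (rhoY m x)) ^ a *
          (β * (β + m - 2) - a * (2 * β + m - 2) * (-Real.log (rhoY m x))⁻¹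
            + a * (a - 1) * ((-Real.log (rhoY m x))⁻¹) ^ 2) := by
  have hmN : m ≤ N := by omega
  -- basic facts
  have hrpos : ∀ x : EuclideanSpace ℝ (Fin N), 0 < rhoY m x → rhoY m x < 1 →
      0 < Sfun m N x ∧ Sfun m N x < 1 := by
    intro x h0 h1
    rw [rhoY_eq_sqrt] at h0 h1
    have hS0 : 0 ≤ Sfun m N x := Sfun_nonneg m x
    have hsq := Real.sq_sqrt hS0
    constructor
    · exact Real.sqrt_pos.1 h0
    · nlinarith [Real.sqrt_nonneg (Sfun m N x)]
  constructor
  · -- smoothness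
    intro x hx
    obtain ⟨hx0, hx1⟩ := hx
    have hrne : rhoY m x ≠ 0 := ne_of_gt hx0
    have hrC : ContDiffAt ℝ (⊤ : ℕ∞) (fun x : EuclideanSpace ℝ (Fin N) => rhoY m x) x := by
      have : ContDiffAt ℝ (⊤ : ℕ∞) (Sfun m N) x := (Sfun_contDiff m).contDiffAt
      exact this.sqrt (Real.sqrt_pos.1 (by rwa [rhoY_eq_sqrt] at hx0)).ne'
    have hlogne : -Real.log (rhoY m x) ≠ 0 := by
      have := Real.log_neg hx0 hx1; linarith
    exact (((hrC.log hrne).neg.rpow_const_of_ne hlogne).mul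
      (hrC.rpow_const_of_ne hrne)).contDiffWithinAt
  · -- Laplacian formula
    intro x hx0 hx1
    obtain ⟨hS0, hS1⟩ := hrpos x hx0 hx1
    set c : ℝ := β / 2 with hc
    set U : Set (EuclideanSpace ℝ (Fin N)) := Sfun m N ⁻¹' Set.Ioo 0 1 with hU
    have hUopen : IsOpen U := isOpen_Ioo.preimage (Sfun_contDiff m).continuous
    have hxU : x ∈ U := ⟨hS0, hS1⟩
    set fval : EuclideanSpace ℝ (Fin N) → ℝ :=
      fun x => (-Real.log (rhoY m x)) ^ a * rhoY m x ^ β with hfval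
    have hfeq : ∀ y ∈ U, fval y = Gf a c (Sfun m N y) := by
      intro y hy
      obtain ⟨hy0, _⟩ := hy
      simp only [hfval, Gf, rhoY_eq_sqrt]
      rw [Real.log_sqrt (le_of_lt hy0), Real.sqrt_eq_rpow, ← Real.rpow_mul (le_of_lt hy0)]
      congr 1
      · congr 1; ring
      · congr 1; rw [hc]; ring
    -- first derivative on U
    have hfd : ∀ y ∈ U, HasFDerivAt fval (G1f a c (Sfun m N y) • Bmap m N y) y := by
      intro y hy
      obtain ⟨hy0, hy1⟩ := hy
      have h0 := (hasDerivAt_Gf a c hy0 hy1).comp_hasFDerivAt y (hasFDerivAt_Sfun m y)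
      refine HasFDerivAt.congr_of_eventuallyEq h0 ?_
      filter_upwards [hUopen.mem_nhds (show y ∈ U from ⟨hy0, hy1⟩)] with z hz
      simpa [Function.comp] using hfeq z hz
    -- second derivative at x
    have hc2 : HasFDerivAt (fun y => G1f a c (Sfun m N y)) (G2f a c (Sfun m N x) • Bmap m N x) x := by
      have := (hasDerivAt_G1f a c hS0 hS1).comp_hasFDerivAt x (hasFDerivAt_Sfun m x)
      simpa [Function.comp_def] using this
    have hφ : HasFDerivAt (fun y => G1f a c (Sfun m N y) • Bmap m N y)
        (G1f a c (Sfun m N x) • Bmap m N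
          + (G2f a c (Sfun m N x) • Bmap m N x).smulRight (Bmap m N x)) x :=
      hc2.smul (Bmap m N).hasFDerivAt
    have h2nd : fderiv ℝ (fderiv ℝ fval) x
        = G1f a c (Sfun m N x) • Bmap m N
          + (G2f a c (Sfun m N x) • Bmap m N x).smulRight (Bmap m N x) := by
      have heq : fderiv ℝ fval =ᶠ[nhds x] fun y => G1f a c (Sfun m N y) • Bmap m N y := by
        filter_upwards [hUopen.mem_nhds hxU] with y hy
        exact (hfd y hy).fderiv
      rw [heq.fderiv_eq, hφ.fderiv]
    -- compute the trace
    have happ : ∀ i : Fin N,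
        (G1f a c (Sfun m N x) • Bmap m N
          + (G2f a c (Sfun m N x) • Bmap m N x).smulRight (Bmap m N x))
            (EuclideanSpace.single i 1) (EuclideanSpace.single i 1)
        = 2 * G1f a c (Sfun m N x) * (if (i : ℕ) < m then (1:ℝ) else 0)
          + 4 * G2f a c (Sfun m N x) * (if (i : ℕ) < m then x i ^ 2 else 0) := by
      intro i
      have hs : Bmap m N (EuclideanSpace.single i 1) (EuclideanSpace.single i 1)
          = if (i : ℕ) < m then 2 else 0 := by
        rw [Bmap_single]
        split_ifs with h
        · simp [EuclideanSpace.single_apply]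
        · rfl
      have hx' : Bmap m N x (EuclideanSpace.single i 1)
          = if (i : ℕ) < m then 2 * x i else 0 := Bmap_single m x i
      simp only [ContinuousLinearMap.add_apply, ContinuousLinearMap.smul_apply,
        ContinuousLinearMap.smulRight_apply, smul_eq_mul, hs, hx']
      split_ifs with h
      · ring
      · ring
    have hlap : lap fval x = 2 * G1f a c (Sfun m N x) * (m : ℝ)
        + 4 * G2f a c (Sfun m N x) * Sfun m N x := by
      unfold lap
      have hterm : ∀ i : Fin N,
          iteratedFDeriv ℝ 2 fval x ![EuclideanSpace.single i 1, EuclideanSpace.single i 1]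
          = 2 * G1f a c (Sfun m N x) * (if (i : ℕ) < m then (1:ℝ) else 0)
            + 4 * G2f a c (Sfun m N x) * (if (i : ℕ) < m then x i ^ 2 else 0) := by
        intro i
        rw [iteratedFDeriv_two_apply, h2nd]
        simpa using happ i
      rw [Finset.sum_congr rfl fun i _ => hterm i]
      rw [Finset.sum_add_distrib, ← Finset.mul_sum, ← Finset.mul_sum, count_lt m hmN]
      rfl
    rw [hlap]
    have := combineG a β (m : ℝ) hS0 hS1
    rw [rhoY_eq_sqrt]
    rw [show (2 : ℝ) * G1f a c (Sfun m N x) * (m : ℝ)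
        + 4 * G2f a c (Sfun m N x) * Sfun m N x
      = 4 * Sfun m N x * G2f a (β / 2) (Sfun m N x)
        + 2 * (m : ℝ) * G1f a (β / 2) (Sfun m N x) by rw [hc]; ring]
    exact this
end

section
/- Let N ≥ 3 and 1 ≤ k ≤ N−2 be integers, set m = N−k, and let a ∈ ℝ. Define v_a(y,z) = (−log‖y‖)^a ‖y‖^{(2+k−N)/2} on the open set Ω = {(y,z) ∈ ℝ^m × ℝ^k : 0 < ‖y‖ < 1}. Then at every point of Ω, Δ v_a = −((N−k−2)/2)² ‖y‖^{−2} v_a + a(a−1) ‖y‖^{−2} (log‖y‖)^{−2} v_a, where Δ is the Laplacian on ℝ^N. -/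
open MeasureTheory

/-!
Writing `s = ‖y‖²`, the function `v_a` is `g(s)` with `g(t) = (-log t / 2)^a t^{(2+k-N)/4}`.
Since `s` is a quadratic form with gradient `2y` and Laplacian `2m`, the chain rule gives
`Δ(g ∘ s) = 2m g'(s) + 4s g''(s)`, and the claim is the one-variable computation of
`g'` and `g''`, whose powers of `-log t` and `t` are again of the same shape.
-/

open Filter Topology

section SqNormFst

variable {N : ℕ} (m : ℕ)

noncomputable def sqNormFst (x : EuclideanSpace ℝ (Fin N)) : ℝ :=
  ∑ i : Fin N, if (i : ℕ) < m then x i ^ 2 else 0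

theorem rhoY_eq_sqrt_sqNormFst (x : EuclideanSpace ℝ (Fin N)) :
    rhoY m x = √(sqNormFst m x) :=
  rfl

theorem sqNormFst_nonneg (x : EuclideanSpace ℝ (Fin N)) : 0 ≤ sqNormFst m x :=
  Finset.sum_nonneg fun i _ => by split_ifs <;> positivity

/-- Both the derivative map `x ↦ D(sqNormFst m)(x)` and the Hessian of `sqNormFst m`. -/
noncomputable def sqNormFstDeriv :
    EuclideanSpace ℝ (Fin N) →L[ℝ] EuclideanSpace ℝ (Fin N) →L[ℝ] ℝ :=
  ∑ i : Fin N, if (i : ℕ) < m then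
    (2 : ℝ) • (EuclideanSpace.proj i).smulRight (EuclideanSpace.proj i) else 0

theorem sqNormFstDeriv_apply (x v : EuclideanSpace ℝ (Fin N)) :
    sqNormFstDeriv m x v = ∑ i : Fin N, if (i : ℕ) < m then 2 * (x i * v i) else 0 := by
  simp only [sqNormFstDeriv, sum_apply]
  refine Finset.sum_congr rfl fun i _ => ?_
  split_ifs <;> simp

theorem sqNormFstDeriv_apply_single (x : EuclideanSpace ℝ (Fin N)) (i : Fin N) :
    sqNormFstDeriv m x (EuclideanSpace.single i 1) = if (i : ℕ) < m then 2 * x i else 0 := by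
  rw [sqNormFstDeriv_apply, Finset.sum_eq_single i]
  · simp
  · intro j _ hji
    simp [hji]
  · simp

theorem hasFDerivAt_sqNormFst (x : EuclideanSpace ℝ (Fin N)) :
    HasFDerivAt (sqNormFst m) (sqNormFstDeriv m x) x := by
  have hproj (i : Fin N) : HasFDerivAt (fun y : EuclideanSpace ℝ (Fin N) => y i)
      (EuclideanSpace.proj i : EuclideanSpace ℝ (Fin N) →L[ℝ] ℝ) x :=
    (EuclideanSpace.proj (𝕜 := ℝ) i).hasFDerivAt (x := x)
  have hsum := HasFDerivAt.fun_sum (u := Finset.univ) fun i _ =>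
    ((hproj i).pow 2).const_mul (if (i : ℕ) < m then (1 : ℝ) else 0)
  have hfun : sqNormFst m = fun y : EuclideanSpace ℝ (Fin N) =>
      ∑ i : Fin N, (if (i : ℕ) < m then (1 : ℝ) else 0) * y i ^ 2 := by
    funext y
    exact Finset.sum_congr rfl fun i _ => by split_ifs <;> simp
  rw [hfun]
  refine hsum.congr_fderiv ?_
  ext v
  simp only [sqNormFstDeriv_apply, sum_apply, smul_apply, smul_eq_mul, PiLp.proj_apply]
  exact Finset.sum_congr rfl fun i _ => by split_ifs <;> simp; ring

theorem continuous_sqNormFst : Continuous (sqNormFst m : EuclideanSpace ℝ (Fin N) → ℝ) :=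
  continuous_iff_continuousAt.2 fun x => (hasFDerivAt_sqNormFst m x).continuousAt

variable {m} {g g' : ℝ → ℝ} {g'' : ℝ} {x : EuclideanSpace ℝ (Fin N)}

theorem hasFDerivAt_fderiv_comp_sqNormFst
    (hg : ∀ᶠ t in 𝓝 (sqNormFst m x), HasDerivAt g (g' t) t)
    (hg' : HasDerivAt g' g'' (sqNormFst m x)) :
    HasFDerivAt (fderiv ℝ (fun y => g (sqNormFst m y)))
      (g' (sqNormFst m x) • sqNormFstDeriv m
        + (g'' • sqNormFstDeriv m x).smulRight (sqNormFstDeriv m x)) x := by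
  have hfderiv : fderiv ℝ (fun y => g (sqNormFst m y))
      =ᶠ[𝓝 x] fun y => g' (sqNormFst m y) • sqNormFstDeriv m y := by
    filter_upwards [(continuous_sqNormFst m).continuousAt.eventually hg] with y hy
    exact (hy.comp_hasFDerivAt y (hasFDerivAt_sqNormFst m y)).fderiv
  refine HasFDerivAt.congr_of_eventuallyEq ?_ hfderiv
  exact (hg'.comp_hasFDerivAt x (hasFDerivAt_sqNormFst m x)).smul
    (sqNormFstDeriv m).hasFDerivAt

theorem lap_comp_sqNormFst
    (hg : ∀ᶠ t in 𝓝 (sqNormFst m x), HasDerivAt g (g' t) t)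
    (hg' : HasDerivAt g' g'' (sqNormFst m x)) :
    lap (fun y => g (sqNormFst m y)) x
      = 2 * min N m * g' (sqNormFst m x) + 4 * sqNormFst m x * g'' := by
  simp only [lap, iteratedFDeriv_two_apply, Matrix.cons_val_zero, Matrix.cons_val_one,
    (hasFDerivAt_fderiv_comp_sqNormFst hg hg').fderiv, add_apply,
    smul_apply, ContinuousLinearMap.smulRight_apply, smul_eq_mul,
    sqNormFstDeriv_apply_single, Finset.sum_add_distrib]
  have hcount : ∑ i : Fin N, (if (i : ℕ) < m then (2 : ℝ) else 0) = 2 * min N m := by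
    simp [← Finset.sum_filter, Fin.card_filter_val_lt, mul_comm]
  have hgrad : ∑ i : Fin N, (if (i : ℕ) < m then 2 * x i else 0) ^ 2 = 4 * sqNormFst m x := by
    rw [sqNormFst, Finset.mul_sum]
    exact Finset.sum_congr rfl fun i _ => by split_ifs <;> ring
  simp only [PiLp.single_apply, if_true, mul_one, ← Finset.mul_sum, hcount]
  rw [← hgrad, Finset.sum_mul]
  congr 1
  · ring
  · exact Finset.sum_congr rfl fun i _ => by ring

end SqNormFst

section LogPowMulRpow

noncomputable def logPowMulRpow (p q t : ℝ) : ℝ := (-Real.log t / 2) ^ p * t ^ q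

theorem sqrt_logPowMulRpow (a α : ℝ) {t : ℝ} (ht : 0 ≤ t) :
    (-Real.log √t) ^ a * √t ^ α = logPowMulRpow a (α / 2) t := by
  rw [Real.log_sqrt ht, Real.sqrt_eq_rpow, ← Real.rpow_mul ht, logPowMulRpow, neg_div,
    one_div_mul_eq_div]

theorem hasDerivAt_logPowMulRpow (p q : ℝ) {t : ℝ} (ht0 : 0 < t) (ht1 : t < 1) :
    HasDerivAt (logPowMulRpow p q)
      (-(p / 2) * logPowMulRpow (p - 1) (q - 1) t + q * logPowMulRpow p (q - 1) t) t := by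
  have hL : 0 < -Real.log t / 2 := by linarith [Real.log_neg ht0 ht1]
  have hlog : HasDerivAt (fun s => -Real.log s / 2) (-t⁻¹ / 2) t :=
    (Real.hasDerivAt_log ht0.ne').neg.div_const 2
  refine ((hlog.rpow_const (Or.inl hL.ne')).mul
    (Real.hasDerivAt_rpow_const (p := q) (Or.inl ht0.ne'))).congr_deriv ?_
  simp only [logPowMulRpow]
  rw [Real.rpow_sub hL, Real.rpow_sub ht0, Real.rpow_one, Real.rpow_one]
  field_simp

end LogPowMulRpow

theorem laplacian_perturbed_ground_state_general (N k m : ℕ)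
    (hk2 : k ≤ N - 2) (hm : m = N - k) (a : ℝ) :
    ∀ x : EuclideanSpace ℝ (Fin N), 0 < rhoY m x → rhoY m x < 1 →
      lap (fun x : EuclideanSpace ℝ (Fin N) =>
          (-Real.log (rhoY m x)) ^ a * rhoY m x ^ (((2 : ℝ) + k - N) / 2)) x =
        -(((N : ℝ) - k - 2) / 2) ^ 2 *
            ((-Real.log (rhoY m x)) ^ a * rhoY m x ^ (((2 : ℝ) + k - N) / 2)) / (rhoY m x) ^ 2
          + a * (a - 1) *
            ((-Real.log (rhoY m x)) ^ a * rhoY m x ^ (((2 : ℝ) + k - N) / 2)) /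
              ((rhoY m x) ^ 2 * (Real.log (rhoY m x)) ^ 2) := by
  intro x hρ0 hρ1
  set α : ℝ := ((2 : ℝ) + k - N) / 2
  set t := sqNormFst m x with ht
  have ht0 : 0 < t := Real.sqrt_pos.1 hρ0
  have ht1 : t < 1 := ((Real.sqrt_lt' one_pos).1 hρ1).trans_eq (one_pow 2)
  have hv : (fun y : EuclideanSpace ℝ (Fin N) => (-Real.log (rhoY m y)) ^ a * rhoY m y ^ α)
      = fun y => logPowMulRpow a (α / 2) (sqNormFst m y) :=
    funext fun y => sqrt_logPowMulRpow a α (sqNormFst_nonneg m y)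
  have hg := Filter.eventually_of_mem (Ioo_mem_nhds ht0 ht1) fun s hs =>
    hasDerivAt_logPowMulRpow a (α / 2) hs.1 hs.2
  have hg' := ((hasDerivAt_logPowMulRpow (a - 1) (α / 2 - 1) ht0 ht1).const_mul (-(a / 2))).add
    ((hasDerivAt_logPowMulRpow a (α / 2 - 1) ht0 ht1).const_mul (α / 2))
  rw [hv, lap_comp_sqNormFst hg hg', rhoY_eq_sqrt_sqNormFst, sqrt_logPowMulRpow a α ht0.le,
    Real.log_sqrt ht0.le, Real.sq_sqrt ht0.le, ← ht]
  have hmin : ((min N m : ℕ) : ℝ) = N - k := by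
    rw [min_eq_right (by omega), hm, Nat.cast_sub (by omega)]
  have hlog : Real.log t < 0 := Real.log_neg ht0 ht1
  have hL : 0 < -Real.log t / 2 := by linarith
  have hlog0 : Real.log t ≠ 0 := hlog.ne
  simp only [α, hmin, logPowMulRpow, Real.rpow_sub hL, Real.rpow_sub ht0, Real.rpow_one]
  field_simp
  ring

/-- The logarithmically perturbed virtual ground state
`v_a(y,z) = (-log ‖y‖)^a ‖y‖^{(2+k-N)/2}` satisfies, on `{0 < ‖y‖ < 1}`,
`Δv_a = -((N-k-2)/2)² ‖y‖⁻² v_a + a(a-1) ‖y‖⁻² (log ‖y‖)⁻² v_a`. -/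
theorem laplacian_perturbed_ground_state (N k m : ℕ) (hN : 3 ≤ N) (hk1 : 1 ≤ k)
    (hk2 : k ≤ N - 2) (hm : m = N - k) (a : ℝ) :
    ∀ x : EuclideanSpace ℝ (Fin N), 0 < rhoY m x → rhoY m x < 1 →
      lap (fun x : EuclideanSpace ℝ (Fin N) =>
          (-Real.log (rhoY m x)) ^ a * rhoY m x ^ (((2 : ℝ) + k - N) / 2)) x =
        -(((N : ℝ) - k - 2) / 2) ^ 2 *
            ((-Real.log (rhoY m x)) ^ a * rhoY m x ^ (((2 : ℝ) + k - N) / 2)) / (rhoY m x) ^ 2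
          + a * (a - 1) *
            ((-Real.log (rhoY m x)) ^ a * rhoY m x ^ (((2 : ℝ) + k - N) / 2)) /
              ((rhoY m x) ^ 2 * (Real.log (rhoY m x)) ^ 2) :=
  laplacian_perturbed_ground_state_general N k m hk2 hm a
end

section
/- Let n ≥ 1, let Ω ⊆ ℝ^n be open, let b : Ω → ℝ be continuously differentiable with b > 0 on Ω, let W : Ω → ℝ be continuous, and let V : Ω → ℝ be twice continuously differentiable with V > 0 on Ω and satisfying −div(b ∇V) ≥ W V pointwise on Ω. Then for every smooth function u : ℝ^n → ℝ with compact support contained in Ω, ∫_Ω b(x) |∇u(x)|² dx ≥ ∫_Ω W(x) |u(x)|² dx. -/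
open MeasureTheory

lemma integral_fderiv_apply_eq_zero {n : ℕ} {h : EuclideanSpace ℝ (Fin n) → ℝ}
    (hh : ContDiff ℝ 1 h) (hc : HasCompactSupport h) (v : EuclideanSpace ℝ (Fin n)) :
    ∫ x, fderiv ℝ h x v = 0 := by
  have hcont : Continuous fun x => fderiv ℝ h x v :=
    (hh.continuous_fderiv one_ne_zero).clm_apply continuous_const
  have hcs : HasCompactSupport fun x => fderiv ℝ h x v := by
    have := hc.fderiv (𝕜 := ℝ)
    exact this.comp_left (g := fun L : _ →L[ℝ] ℝ => L v) rfl
  have h1 : Integrable (fun x => fderiv ℝ h x v * (fun _ => (1:ℝ)) x) volume := by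
    simpa using hcont.integrable_of_hasCompactSupport hcs
  have h2 : Integrable (fun x => h x * fderiv ℝ (fun _ => (1:ℝ)) x v) volume := by
    simp only [fderiv_fun_const, Pi.zero_apply, ContinuousLinearMap.zero_apply, mul_zero]
    exact integrable_zero _ _ _
  have h3 : Integrable (fun x => h x * (fun _ => (1:ℝ)) x) volume := by
    simpa using hh.continuous.integrable_of_hasCompactSupport hc
  have key := integral_mul_fderiv_eq_neg_fderiv_mul_of_integrable (μ := volume)
    h1 h2 h3 (fun x _ => hh.differentiable one_ne_zero x) (fun x _ => differentiableAt_const _)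
  simp only [fderiv_fun_const, Pi.zero_apply, ContinuousLinearMap.zero_apply, mul_zero, mul_one,
    integral_zero] at key
  linarith [key]

lemma contDiff_glue {E' : Type*} [NormedAddCommGroup E'] [NormedSpace ℝ E']
    {h : E' → ℝ} {Ω K : Set E'} (hΩ : IsOpen Ω) (hK : IsClosed K) (hKΩ : K ⊆ Ω)
    (h1 : ContDiffOn ℝ 1 h Ω) (h0 : ∀ x ∉ K, h x = 0) : ContDiff ℝ 1 h := by
  rw [← contDiffOn_univ]
  intro x _
  by_cases hx : x ∈ Ω
  · exact (h1.contDiffAt (hΩ.mem_nhds hx)).contDiffWithinAt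
  · have hev : h =ᶠ[nhds x] (fun _ => (0:ℝ)) := by
      filter_upwards [hK.isOpen_compl.mem_nhds (fun hxK => hx (hKΩ hxK))] with y hy
      exact h0 y hy
    exact ((contDiffAt_const (c := (0:ℝ))).congr_of_eventuallyEq hev).contDiffWithinAt

lemma integrableOn_aux {n : ℕ} {f : EuclideanSpace ℝ (Fin n) → ℝ}
    {Ω K : Set (EuclideanSpace ℝ (Fin n))} (hΩ : IsOpen Ω) (hK : IsCompact K) (hKΩ : K ⊆ Ω)
    (hf : ContinuousOn f Ω) (h0 : ∀ x ∉ K, f x = 0) : IntegrableOn f Ω volume := by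
  have hIK : IntegrableOn f K volume := (hf.mono hKΩ).integrableOn_compact hK
  have hId : IntegrableOn f (Ω \ K) volume := by
    have hz : IntegrableOn (fun _ => (0:ℝ)) (Ω \ K) volume := integrableOn_zero
    exact (integrableOn_congr_fun (fun x hx => h0 x hx.2)
      (hΩ.measurableSet.diff hK.measurableSet)).2 hz
  exact ((hIK.union hId).mono_set (fun x hx => by
    by_cases hxK : x ∈ K
    · exact Set.mem_union_left _ hxK
    · exact Set.mem_union_right _ ⟨hx, hxK⟩))


set_option maxHeartbeats 1000000 in
/-- Ground-state representation (Allegretto–Piepenbrink): if `V > 0` is a `C²`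
supersolution of `-div(b ∇V) ≥ W V` on an open set `Ω` (where
`div(b∇V) = b ΔV + ⟨∇b, ∇V⟩`), then for every smooth `u` compactly supported
in `Ω` one has `∫_Ω b |∇u|² ≥ ∫_Ω W |u|²`. -/
theorem ground_state_representation (n : ℕ) (hn : 1 ≤ n)
    (Ω : Set (EuclideanSpace ℝ (Fin n))) (hΩ : IsOpen Ω)
    (b W V : EuclideanSpace ℝ (Fin n) → ℝ)
    (hb : ContDiffOn ℝ 1 b Ω) (hbpos : ∀ x ∈ Ω, 0 < b x)
    (hW : ContinuousOn W Ω)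
    (hV : ContDiffOn ℝ 2 V Ω) (hVpos : ∀ x ∈ Ω, 0 < V x)
    (hsuper : ∀ x ∈ Ω,
      -(b x * lap V x + (inner ℝ (gradient b x) (gradient V x) : ℝ)) ≥ W x * V x)
    (u : EuclideanSpace ℝ (Fin n) → ℝ) (hu : ContDiff ℝ (⊤ : ℕ∞) u)
    (hcs : HasCompactSupport u) (hsupp : tsupport u ⊆ Ω) :
    ∫ x in Ω, b x * ‖gradient u x‖ ^ 2 ≥ ∫ x in Ω, W x * (u x) ^ 2 := by
  classical
  set e : Fin n → EuclideanSpace ℝ (Fin n) := fun i => EuclideanSpace.single i 1 with he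
  set K := tsupport u with hK
  have hKc : IsCompact K := hcs
  have hKcl : IsClosed K := isClosed_closure
  have hu1 : ContDiff ℝ 1 u := hu.of_le (by simp)
  set ψ : EuclideanSpace ℝ (Fin n) → ℝ := fun y => u y * u y * (V y)⁻¹ with hψdef
  set DV : EuclideanSpace ℝ (Fin n) → (EuclideanSpace ℝ (Fin n) →L[ℝ] ℝ) :=
    fun y => fderiv ℝ V y with hDVdef
  set g : Fin n → EuclideanSpace ℝ (Fin n) → ℝ := fun i y => b y * ψ y * DV y (e i) with hgdef
  -- regularity of g
  have hVne : ∀ x ∈ Ω, V x ≠ 0 := fun x hx => (hVpos x hx).ne'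
  have hψΩ : ContDiffOn ℝ 1 ψ Ω :=
    (hu1.contDiffOn.mul hu1.contDiffOn).mul ((hV.of_le one_le_two).inv hVne)
  have hDVΩ : ContDiffOn ℝ 1 DV Ω := hV.fderiv_of_isOpen hΩ le_rfl
  have hgΩ : ∀ i, ContDiffOn ℝ 1 (g i) Ω := fun i =>
    (hb.mul hψΩ).mul (hDVΩ.clm_apply contDiffOn_const)
  have hu0 : ∀ x ∉ K, u x = 0 := fun x hx => image_eq_zero_of_notMem_tsupport hx
  have hg0 : ∀ i, ∀ x ∉ K, g i x = 0 := by
    intro i x hx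
    simp [hgdef, hψdef, hu0 x hx]
  have hgC : ∀ i, ContDiff ℝ 1 (g i) := fun i =>
    contDiff_glue hΩ hKcl hsupp (hgΩ i) (hg0 i)
  have hgK : ∀ i, HasCompactSupport (g i) := fun i => HasCompactSupport.intro hKc (hg0 i)
  -- the divergence term
  set D : EuclideanSpace ℝ (Fin n) → ℝ := fun x => ∑ i, fderiv ℝ (g i) x (e i) with hDdef
  have hD0 : ∀ x ∉ K, D x = 0 := by
    intro x hx
    have hev : ∀ i, (g i) =ᶠ[nhds x] (fun _ => (0:ℝ)) := by
      intro i
      filter_upwards [hKcl.isOpen_compl.mem_nhds hx] with y hy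
      exact hg0 i y hy
    have : ∀ i, fderiv ℝ (g i) x = 0 := by
      intro i
      rw [(hev i).fderiv_eq]
      exact fderiv_const_apply 0
    simp [hDdef, this]
  have hDcont : Continuous D :=
    continuous_finset_sum _ fun i _ => ((hgC i).continuous_fderiv one_ne_zero).clm_apply continuous_const
  have hDint : Integrable D := hDcont.integrable_of_hasCompactSupport
    (HasCompactSupport.intro hKc hD0)
  have hintD : ∫ x, D x = 0 := by
    rw [integral_finset_sum]
    · exact Finset.sum_eq_zero fun i _ => integral_fderiv_apply_eq_zero (hgC i) (hgK i) (e i)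
    · intro i _
      refine (((hgC i).continuous_fderiv one_ne_zero).clm_apply
        continuous_const).integrable_of_hasCompactSupport ?_
      exact ((hgK i).fderiv (𝕜 := ℝ)).comp_left (g := fun L : _ →L[ℝ] ℝ => L (e i)) rfl
  have hintDΩ : ∫ x in Ω, D x = 0 := by
    rw [setIntegral_eq_integral_of_forall_compl_eq_zero
      (fun x hx => hD0 x fun hxK => hx (hsupp hxK))]
    exact hintD
  -- pointwise inequality
  have hpt : ∀ x ∈ Ω, D x ≤ b x * ‖gradient u x‖ ^ 2 - W x * (u x) ^ 2 := by
    intro x hx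
    have hVx : 0 < V x := hVpos x hx
    have hVn : V x ≠ 0 := hVx.ne'
    have hbx : 0 < b x := hbpos x hx
    have hmem := hΩ.mem_nhds hx
    have hb' : HasFDerivAt b (fderiv ℝ b x) x :=
      ((hb.differentiableOn one_ne_zero).differentiableAt hmem).hasFDerivAt
    have hu' : HasFDerivAt u (fderiv ℝ u x) x := (hu1.differentiable one_ne_zero x).hasFDerivAt
    have hV' : HasFDerivAt V (DV x) x :=
      (((hV.of_le one_le_two).differentiableOn one_ne_zero).differentiableAt hmem).hasFDerivAt
    have hDV' : HasFDerivAt DV (fderiv ℝ DV x) x :=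
      ((hDVΩ.differentiableOn one_ne_zero).differentiableAt hmem).hasFDerivAt
    have hVinv' : HasFDerivAt (fun y => (V y)⁻¹) ((-((V x)^2)⁻¹) • DV x) x :=
      (hasDerivAt_inv hVn).comp_hasFDerivAt x hV'
    have hψ' : HasFDerivAt ψ ((u x * u x) • ((-((V x)^2)⁻¹) • DV x)
        + (V x)⁻¹ • (u x • fderiv ℝ u x + u x • fderiv ℝ u x)) x :=
      (hu'.mul hu').mul hVinv'
    have hDx : D x = ∑ i, (b x * ψ x * (fderiv ℝ DV x (e i) (e i))
        + DV x (e i) * (b x * (u x * u x * (-((V x)^2)⁻¹ * DV x (e i))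
            + (V x)⁻¹ * (u x * fderiv ℝ u x (e i) + u x * fderiv ℝ u x (e i)))
          + ψ x * fderiv ℝ b x (e i))) := by
      refine Finset.sum_congr rfl fun i _ => ?_
      have hDVi : HasFDerivAt (fun y => DV y (e i))
          ((DV x).comp (0 : EuclideanSpace ℝ (Fin n) →L[ℝ] EuclideanSpace ℝ (Fin n))
            + (fderiv ℝ DV x).flip (e i)) x :=
        hDV'.clm_apply (hasFDerivAt_const (e i) x)
      have hg' : HasFDerivAt (g i) _ x := (hb'.mul hψ').mul hDVi
      rw [hg'.fderiv]
      simp only [ContinuousLinearMap.add_apply, ContinuousLinearMap.smul_apply,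
        ContinuousLinearMap.comp_apply, ContinuousLinearMap.zero_apply,
        ContinuousLinearMap.flip_apply, smul_eq_mul, map_zero, Pi.mul_apply]
      ring
    have hgrad : ∀ (f : EuclideanSpace ℝ (Fin n) → ℝ) (v : EuclideanSpace ℝ (Fin n)),
        (inner ℝ (gradient f x) v : ℝ) = fderiv ℝ f x v := fun f v =>
      InnerProductSpace.toDual_symm_apply
    have hlap : lap V x = ∑ i, fderiv ℝ DV x (e i) (e i) := by
      refine Finset.sum_congr rfl fun i _ => ?_
      rw [iteratedFDeriv_two_apply]
      simp [he, hDVdef]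
    have hinner : (inner ℝ (gradient b x) (gradient V x) : ℝ)
        = ∑ i, fderiv ℝ b x (e i) * DV x (e i) := by
      rw [← OrthonormalBasis.sum_inner_mul_inner (EuclideanSpace.basisFun (Fin n) ℝ)
        (gradient b x) (gradient V x)]
      refine Finset.sum_congr rfl fun i _ => ?_
      rw [real_inner_comm (gradient V x) ((EuclideanSpace.basisFun (Fin n) ℝ) i)]
      rw [EuclideanSpace.basisFun_apply, hgrad b, hgrad V]
    have hnorm : ‖gradient u x‖ ^ 2 = ∑ i, (fderiv ℝ u x (e i))^2 := by
      rw [← real_inner_self_eq_norm_sq, ← OrthonormalBasis.sum_inner_mul_inner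
        (EuclideanSpace.basisFun (Fin n) ℝ) (gradient u x) (gradient u x)]
      refine Finset.sum_congr rfl fun i _ => ?_
      rw [real_inner_comm (gradient u x) ((EuclideanSpace.basisFun (Fin n) ℝ) i)]
      rw [EuclideanSpace.basisFun_apply, hgrad u, sq]
    have hs := hsuper x hx
    rw [hlap, hinner] at hs
    have hψnn : 0 ≤ ψ x := mul_nonneg (mul_self_nonneg _) (inv_nonneg.2 hVx.le)
    have hψV : ψ x * V x = u x * u x := by
      show u x * u x * (V x)⁻¹ * V x = u x * u x
      field_simp
    have hterm : ∀ i, b x * ψ x * (fderiv ℝ DV x (e i) (e i))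
        + DV x (e i) * (b x * (u x * u x * (-((V x)^2)⁻¹ * DV x (e i))
            + (V x)⁻¹ * (u x * fderiv ℝ u x (e i) + u x * fderiv ℝ u x (e i)))
          + ψ x * fderiv ℝ b x (e i))
        ≤ b x * (fderiv ℝ u x (e i))^2
          + ψ x * (b x * (fderiv ℝ DV x (e i) (e i)) + fderiv ℝ b x (e i) * DV x (e i)) := by
      intro i
      have hiv : ((V x)^2)⁻¹ = (V x)⁻¹ * (V x)⁻¹ := by rw [sq, mul_inv]
      rw [hiv]
      have base : DV x (e i) * (u x * u x * (-((V x)⁻¹ * (V x)⁻¹) * DV x (e i))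
          + (V x)⁻¹ * (u x * fderiv ℝ u x (e i) + u x * fderiv ℝ u x (e i)))
          ≤ (fderiv ℝ u x (e i))^2 := by
        nlinarith [sq_nonneg (fderiv ℝ u x (e i) - u x * (V x)⁻¹ * DV x (e i))]
      nlinarith [mul_le_mul_of_nonneg_left base hbx.le]
    have hsum : D x ≤ ∑ i, (b x * (fderiv ℝ u x (e i))^2
        + ψ x * (b x * (fderiv ℝ DV x (e i) (e i)) + fderiv ℝ b x (e i) * DV x (e i))) := by
      rw [hDx]
      exact Finset.sum_le_sum fun i _ => hterm i
    have hsplit : ∑ i, (b x * (fderiv ℝ u x (e i))^2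
        + ψ x * (b x * (fderiv ℝ DV x (e i) (e i)) + fderiv ℝ b x (e i) * DV x (e i)))
        = b x * (∑ i, (fderiv ℝ u x (e i))^2)
          + ψ x * (b x * (∑ i, fderiv ℝ DV x (e i) (e i))
            + ∑ i, fderiv ℝ b x (e i) * DV x (e i)) := by
      simp only [mul_add, Finset.mul_sum, Finset.sum_add_distrib]
    have hlast : ψ x * (b x * (∑ i, fderiv ℝ DV x (e i) (e i))
        + ∑ i, fderiv ℝ b x (e i) * DV x (e i)) ≤ -(W x * (u x)^2) := by
      have h1 : b x * (∑ i, fderiv ℝ DV x (e i) (e i))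
          + ∑ i, fderiv ℝ b x (e i) * DV x (e i) ≤ -(W x * V x) := by linarith [hs]
      have h2 := mul_le_mul_of_nonneg_left h1 hψnn
      have h3 : ψ x * -(W x * V x) = -(W x * (u x)^2) := by
        rw [sq, ← hψV]; ring
      rw [h3] at h2
      exact h2
    rw [hnorm]
    rw [hsplit] at hsum
    linarith [hsum, hlast]
  -- integrability of the two integrands
  have hgradu : Continuous fun x => gradient u x := by
    exact (InnerProductSpace.toDual ℝ _).symm.continuous.comp (hu1.continuous_fderiv one_ne_zero)
  have hgrad0 : ∀ x ∉ K, gradient u x = 0 := by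
    intro x hx
    have hev : u =ᶠ[nhds x] (fun _ => (0:ℝ)) := by
      filter_upwards [hKcl.isOpen_compl.mem_nhds hx] with y hy
      exact hu0 y hy
    have hf0 : fderiv ℝ u x = 0 := by rw [hev.fderiv_eq]; exact fderiv_const_apply 0
    show (InnerProductSpace.toDual ℝ _).symm (fderiv ℝ u x) = 0
    rw [hf0]; simp
  have hP1 : IntegrableOn (fun x => b x * ‖gradient u x‖ ^ 2) Ω volume := by
    refine integrableOn_aux hΩ hKc hsupp
      (hb.continuousOn.mul ((hgradu.norm.pow 2).continuousOn)) ?_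
    intro x hx
    rw [hgrad0 x hx]; simp
  have hP2 : IntegrableOn (fun x => W x * (u x) ^ 2) Ω volume := by
    refine integrableOn_aux hΩ hKc hsupp (hW.mul ((hu1.continuous.pow 2).continuousOn)) ?_
    intro x hx
    rw [hu0 x hx]; simp
  have hmono : ∫ x in Ω, D x ≤ ∫ x in Ω, (b x * ‖gradient u x‖ ^ 2 - W x * (u x) ^ 2) :=
    setIntegral_mono_on hDint.integrableOn (hP1.sub hP2) hΩ.measurableSet hpt
  rw [integral_sub hP1 hP2] at hmono
  rw [ge_iff_le]
  linarith [hmono, hintDΩ]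
end

section
/- Let m ≥ 3 be an integer, let r ∈ (0, 1/2) and let a < −1/2. Then the function v_a(y) = (−log‖y‖)^a ‖y‖^{(2−m)/2} is smooth on {y ∈ ℝ^m : 0 < ‖y‖ < 1} and its gradient is square integrable near the origin: ∫_{B_r \ {0}} ‖∇v_a(y)‖² dy < ∞, where B_r = {y ∈ ℝ^m : ‖y‖ < r}. -/
open MeasureTheory

namespace PerturbedGroundStateAux

lemma smooth_part (m : ℕ) (a b : ℝ) :
    ContDiffOn ℝ (⊤ : ℕ∞)
      (fun y : EuclideanSpace ℝ (Fin m) => (-Real.log ‖y‖) ^ a * ‖y‖ ^ b)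
      {y : EuclideanSpace ℝ (Fin m) | 0 < ‖y‖ ∧ ‖y‖ < 1} := by
  intro y hy
  obtain ⟨h0, h1⟩ := hy
  have hy0 : y ≠ 0 := by simpa [norm_pos_iff] using h0
  have hnorm : ContDiffAt ℝ (⊤ : ℕ∞) (fun z : EuclideanSpace ℝ (Fin m) => ‖z‖) y :=
    contDiffAt_norm ℝ hy0
  have hlogpos : 0 < -Real.log ‖y‖ := by
    have := Real.log_neg h0 h1
    linarith
  have hlog : ContDiffAt ℝ (⊤ : ℕ∞) (fun z : EuclideanSpace ℝ (Fin m) => -Real.log ‖z‖) y :=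
    ((Real.contDiffAt_log.mpr h0.ne').comp y hnorm).neg
  have h2 : ContDiffAt ℝ (⊤ : ℕ∞) (fun z : EuclideanSpace ℝ (Fin m) => (-Real.log ‖z‖) ^ a) y :=
    by
      have h := Real.contDiffAt_rpow_const_of_ne (n := (⊤ : ℕ∞)) (p := a) hlogpos.ne'
      exact h.comp y hlog
  have h3 : ContDiffAt ℝ (⊤ : ℕ∞) (fun z : EuclideanSpace ℝ (Fin m) => ‖z‖ ^ b) y :=
    (Real.contDiffAt_rpow_const_of_ne h0.ne').comp y hnorm
  exact (h2.mul h3).contDiffWithinAt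



lemma hasDerivAt_f (a b : ℝ) {t : ℝ} (h0 : 0 < t) (h1 : t < 1) :
    HasDerivAt (fun t : ℝ => (-Real.log t) ^ a * t ^ b)
      ((-t⁻¹ * a * (-Real.log t) ^ (a - 1)) * t ^ b
        + (-Real.log t) ^ a * (b * t ^ (b - 1))) t := by
  have hlogpos : 0 < -Real.log t := by have := Real.log_neg h0 h1; linarith
  have hlog : HasDerivAt (fun t : ℝ => -Real.log t) (-t⁻¹) t :=
    (Real.hasDerivAt_log h0.ne').neg
  have h2 : HasDerivAt (fun t : ℝ => (-Real.log t) ^ a)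
      (-t⁻¹ * a * (-Real.log t) ^ (a - 1)) t :=
    hlog.rpow_const (Or.inl hlogpos.ne')
  have h3 : HasDerivAt (fun t : ℝ => t ^ b) (b * t ^ (b - 1)) t :=
    Real.hasDerivAt_rpow_const (Or.inl h0.ne')
  exact h2.mul h3

lemma deriv_abs_le (a b : ℝ) {t : ℝ} (h0 : 0 < t) (h1 : t < 1/2) :
    |(-t⁻¹ * a * (-Real.log t) ^ (a - 1)) * t ^ b
        + (-Real.log t) ^ a * (b * t ^ (b - 1))|
      ≤ ((|a| + |b|) / Real.log 2) * (-Real.log t) ^ a * t ^ (b - 1) := by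
  have hL2 : (0:ℝ) < Real.log 2 := Real.log_pos one_lt_two
  have hL2' : Real.log 2 ≤ 1 := by
    have := Real.log_two_lt_d9; linarith
  have hlg : Real.log 2 ≤ -Real.log t := by
    have : Real.log t ≤ Real.log (1/2) := Real.log_le_log h0 h1.le
    rw [Real.log_div one_ne_zero two_ne_zero, Real.log_one] at this
    linarith
  have hlogpos : 0 < -Real.log t := lt_of_lt_of_le hL2 hlg
  have hP : (0:ℝ) < (-Real.log t) ^ a := Real.rpow_pos_of_pos hlogpos a
  have hQ : (0:ℝ) < t ^ (b - 1) := Real.rpow_pos_of_pos h0 _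
  have hrw1 : (-Real.log t) ^ (a - 1) = (-Real.log t) ^ a / (-Real.log t) :=
    Real.rpow_sub_one hlogpos.ne' a
  have hrw2 : t ^ (b - 1) = t ^ b / t := Real.rpow_sub_one h0.ne' b
  have hb1 : (-Real.log t) ^ (a - 1) ≤ (-Real.log t) ^ a / Real.log 2 := by
    rw [hrw1]
    exact div_le_div_of_nonneg_left hP.le hL2 hlg
  calc |(-t⁻¹ * a * (-Real.log t) ^ (a - 1)) * t ^ b
        + (-Real.log t) ^ a * (b * t ^ (b - 1))|
      ≤ |(-t⁻¹ * a * (-Real.log t) ^ (a - 1)) * t ^ b|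
        + |(-Real.log t) ^ a * (b * t ^ (b - 1))| := abs_add_le _ _
    _ = |a| * ((-Real.log t) ^ (a - 1) * (t ^ b / t))
        + |b| * ((-Real.log t) ^ a * t ^ (b - 1)) := by
        rw [abs_mul, abs_mul, abs_mul, abs_mul, abs_mul, abs_neg, abs_inv,
          abs_of_pos h0, abs_of_pos (Real.rpow_pos_of_pos hlogpos (a-1)),
          abs_of_pos (Real.rpow_pos_of_pos h0 b), abs_of_pos hP, abs_of_pos hQ]
        ring
    _ ≤ |a| * (((-Real.log t) ^ a / Real.log 2) * t ^ (b-1))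
        + |b| * ((-Real.log t) ^ a * t ^ (b - 1)) := by
        rw [← hrw2]
        gcongr
    _ ≤ ((|a| + |b|) / Real.log 2) * (-Real.log t) ^ a * t ^ (b - 1) := by
        rw [add_div]
        have h2 : |b| ≤ |b| / Real.log 2 := by
          rw [le_div_iff₀ hL2]
          nlinarith [abs_nonneg b]
        have h3 : |b| * ((-Real.log t) ^ a * t ^ (b-1))
            ≤ |b| / Real.log 2 * ((-Real.log t) ^ a * t ^ (b-1)) := by
          apply mul_le_mul_of_nonneg_right h2 (by positivity)
        have heq : (|a| / Real.log 2 + |b| / Real.log 2) * (-Real.log t) ^ a * t ^ (b-1)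
            = |a| * ((-Real.log t) ^ a / Real.log 2 * t ^ (b-1))
              + |b| / Real.log 2 * ((-Real.log t) ^ a * t ^ (b-1)) := by ring
        linarith [h3, heq.ge]

lemma grad_norm_le (m : ℕ) (a b : ℝ) {y : EuclideanSpace ℝ (Fin m)}
    (h0 : 0 < ‖y‖) (h1 : ‖y‖ < 1/2) :
    ‖gradient (fun y : EuclideanSpace ℝ (Fin m) =>
        (-Real.log ‖y‖) ^ a * ‖y‖ ^ b) y‖
      ≤ ((|a| + |b|) / Real.log 2) * (-Real.log ‖y‖) ^ a * ‖y‖ ^ (b - 1) := by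
  have hy0 : y ≠ 0 := by simpa [norm_pos_iff] using h0
  set L := fderiv ℝ (fun z : EuclideanSpace ℝ (Fin m) => ‖z‖) y with hLdef
  have hnd : DifferentiableAt ℝ (fun z : EuclideanSpace ℝ (Fin m) => ‖z‖) y :=
    (contDiffAt_norm ℝ (n := 1) hy0).differentiableAt one_ne_zero
  have hL : HasFDerivAt (fun z : EuclideanSpace ℝ (Fin m) => ‖z‖) L y :=
    hnd.hasFDerivAt
  have hLnorm : ‖L‖ ≤ 1 := by
    simpa using norm_fderiv_le_of_lipschitz ℝ
      (lipschitzWith_one_norm (E := EuclideanSpace ℝ (Fin m)))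
  set D := (-‖y‖⁻¹ * a * (-Real.log ‖y‖) ^ (a - 1)) * ‖y‖ ^ b
        + (-Real.log ‖y‖) ^ a * (b * ‖y‖ ^ (b - 1)) with hD
  have hv : HasFDerivAt (fun y : EuclideanSpace ℝ (Fin m) =>
      (-Real.log ‖y‖) ^ a * ‖y‖ ^ b) (D • L) y :=
    (hasDerivAt_f a b h0 (by linarith)).comp_hasFDerivAt y hL
  have hgrad : ‖gradient (fun y : EuclideanSpace ℝ (Fin m) =>
      (-Real.log ‖y‖) ^ a * ‖y‖ ^ b) y‖ = ‖D • L‖ := by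
    rw [gradient, hv.fderiv]
    exact LinearIsometryEquiv.norm_map _ _
  rw [hgrad]
  calc ‖D • L‖ = |D| * ‖L‖ := by rw [norm_smul, Real.norm_eq_abs]
    _ ≤ |D| * 1 := mul_le_mul_of_nonneg_left hLnorm (abs_nonneg D)
    _ = |D| := mul_one _
    _ ≤ _ := deriv_abs_le a b h0 h1

lemma exists_annulus {r n : ℝ} (h0 : 0 < n) (h1 : n < r) :
    ∃ k : ℕ, r * 2 ^ (-((k : ℝ) + 1)) ≤ n ∧ n < r * 2 ^ (-(k : ℝ)) := by
  classical
  have hr : 0 < r := h0.trans h1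
  have hex : ∃ j : ℕ, r * 2 ^ (-(j : ℝ)) ≤ n := by
    obtain ⟨j, hj⟩ := pow_unbounded_of_one_lt (r / n) (one_lt_two (α := ℝ))
    refine ⟨j, ?_⟩
    rw [Real.rpow_neg (by norm_num), Real.rpow_natCast]
    rw [div_lt_iff₀ h0] at hj
    rw [mul_inv_le_iff₀ (by positivity)]
    nlinarith
  have hj := Nat.find_spec hex
  have hj0 : Nat.find hex ≠ 0 := by
    intro h
    rw [h] at hj
    simp only [Nat.cast_zero, neg_zero, Real.rpow_zero, mul_one] at hj
    linarith
  obtain ⟨k, hk⟩ := Nat.exists_eq_succ_of_ne_zero hj0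
  have hmin : ¬ (r * 2 ^ (-(k : ℝ)) ≤ n) := by
    have := Nat.find_min hex (m := k) (by omega)
    exact this
  refine ⟨k, ?_, not_le.mp hmin⟩
  rw [hk] at hj
  push_cast at hj
  convert hj using 3 <;> push_cast <;> ring

lemma main_int (m : ℕ) (hm : 3 ≤ m) (r : ℝ)
    (hr0 : 0 < r) (hr1 : r < 1 / 2) (a : ℝ) (ha : a < -(1 / 2 : ℝ)) :
    IntegrableOn
      (fun y : EuclideanSpace ℝ (Fin m) =>
        ‖gradient (fun y : EuclideanSpace ℝ (Fin m) =>
            (-Real.log ‖y‖) ^ a * ‖y‖ ^ (((2 : ℝ) - m) / 2)) y‖ ^ 2)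
      (Metric.ball 0 r \ {0}) := by
  classical
  set E := EuclideanSpace ℝ (Fin m)
  haveI : Nontrivial E := by
    apply Module.nontrivial_of_finrank_pos (R := ℝ)
    rw [finrank_euclideanSpace_fin]
    omega
  set b : ℝ := ((2 : ℝ) - m) / 2 with hbdef
  set K : ℝ := (|a| + |b|) / Real.log 2 with hKdef
  have hK0 : 0 ≤ K := by
    apply div_nonneg (by positivity) (Real.log_pos one_lt_two).le
  set v : E → ℝ := fun y => (-Real.log ‖y‖) ^ a * ‖y‖ ^ b with hvdef
  set g : E → ℝ := fun y => ‖gradient v y‖ ^ 2 with hgdef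
  set s : Set E := Metric.ball 0 r \ {0} with hsdef
  have hsm : MeasurableSet s := measurableSet_ball.diff (measurableSet_singleton 0)
  -- annuli
  set R : ℕ → ℝ := fun k => r * 2 ^ (-(k : ℝ)) with hRdef
  have hRpos : ∀ k, 0 < R k := fun k => by positivity
  have hRler : ∀ k, R k ≤ r := fun k => by
    have h2 : (2:ℝ) ^ (-(k:ℝ)) ≤ 1 :=
      Real.rpow_le_one_of_one_le_of_nonpos one_le_two (neg_nonpos.mpr (Nat.cast_nonneg k))
    simp only [hRdef]
    nlinarith
  set A : ℕ → Set E := fun k => Metric.ball 0 (R k) \ Metric.ball 0 (R (k + 1)) with hAdef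
  have hAm : ∀ k, MeasurableSet (A k) := fun k =>
    measurableSet_ball.diff measurableSet_ball
  have hcover : s ⊆ ⋃ k, A k := by
    rintro y ⟨hyr, hy0⟩
    have h0 : 0 < ‖y‖ := by
      exact norm_pos_iff.mpr fun h => hy0 (Set.mem_singleton_iff.mpr h)
    have h1 : ‖y‖ < r := by simpa [Metric.mem_ball, dist_zero_right] using hyr
    obtain ⟨k, hk1, hk2⟩ := exists_annulus h0 h1
    refine Set.mem_iUnion.mpr ⟨k, ?_, ?_⟩
    · simpa [Metric.mem_ball, dist_zero_right, hRdef] using hk2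
    · intro hmem
      have hlt : ‖y‖ < R (k+1) := by
        simpa [Metric.mem_ball, dist_zero_right] using hmem
      have : R (k+1) = r * 2 ^ (-((k:ℝ)+1)) := by
        simp only [hRdef]
        push_cast
        ring_nf
      rw [this] at hlt
      linarith
  -- continue
  set L2 : ℝ := Real.log 2 with hL2def
  have hL2pos : 0 < L2 := Real.log_pos one_lt_two
  -- per-annulus real bound
  set B : ℕ → ℝ := fun k =>
    K ^ 2 * (((k : ℝ) + 1) * L2) ^ (a * 2) * (R (k + 1)) ^ (-(m : ℝ)) with hBdef
  have hB0 : ∀ k, 0 ≤ B k := fun k => by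
    have := hRpos (k + 1)
    have : (0:ℝ) < ((k:ℝ)+1) * L2 := by positivity
    positivity
  -- pointwise bound on annulus
  have hpt : ∀ k, ∀ y ∈ A k,
      (K * (-Real.log ‖y‖) ^ a * ‖y‖ ^ (b - 1)) ^ 2 ≤ B k := by
    intro k y hy
    obtain ⟨hy1, hy2⟩ := hy
    have hylt : ‖y‖ < R k := by simpa [Metric.mem_ball, dist_zero_right] using hy1
    have hyge : R (k + 1) ≤ ‖y‖ := by
      by_contra h
      exact hy2 (by simpa [Metric.mem_ball, dist_zero_right] using not_le.mp h)
    have hn0 : 0 < ‖y‖ := lt_of_lt_of_le (hRpos (k+1)) hyge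
    have h2k : ‖y‖ < 2 ^ (-((k:ℝ) + 1)) := by
      have he : (2:ℝ) ^ (-((k:ℝ) + 1)) = 2 ^ (-(k:ℝ)) * 2⁻¹ := by
        rw [show -((k:ℝ)+1) = -(k:ℝ) + (-1) by ring, Real.rpow_add two_pos,
          Real.rpow_neg_one]
      have h2kpos : (0:ℝ) < 2 ^ (-(k:ℝ)) := by positivity
      have : R k < 2 ^ (-(k:ℝ)) * 2⁻¹ := by
        simp only [hRdef]
        nlinarith
      linarith [this, hylt, he.ge, he.le]
    have hlogge : ((k:ℝ) + 1) * L2 ≤ -Real.log ‖y‖ := by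
      have := Real.log_lt_log hn0 h2k
      rw [Real.log_rpow two_pos] at this
      simp only [hL2def]
      linarith
    have hlogpos : 0 < -Real.log ‖y‖ := lt_of_lt_of_le (by positivity) hlogge
    have hX2 : ((-Real.log ‖y‖) ^ a) ^ 2 = (-Real.log ‖y‖) ^ (a * 2) := by
      rw [← Real.rpow_natCast ((-Real.log ‖y‖) ^ a) 2, ← Real.rpow_mul hlogpos.le]
      norm_num
    have hY2 : (‖y‖ ^ (b - 1)) ^ 2 = ‖y‖ ^ (-(m:ℝ)) := by
      rw [← Real.rpow_natCast (‖y‖ ^ (b - 1)) 2, ← Real.rpow_mul hn0.le]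
      congr 1
      rw [hbdef]
      push_cast
      ring
    have hexp : (K * (-Real.log ‖y‖) ^ a * ‖y‖ ^ (b - 1)) ^ 2
        = K ^ 2 * ((-Real.log ‖y‖) ^ a) ^ 2 * (‖y‖ ^ (b - 1)) ^ 2 := by ring
    rw [hexp, hX2, hY2, hBdef]
    have hXle : (-Real.log ‖y‖) ^ (a * 2) ≤ (((k:ℝ) + 1) * L2) ^ (a * 2) :=
      Real.rpow_le_rpow_of_nonpos (by positivity) hlogge (by nlinarith)
    have hYle : ‖y‖ ^ (-(m:ℝ)) ≤ (R (k + 1)) ^ (-(m:ℝ)) :=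
      Real.rpow_le_rpow_of_nonpos (hRpos (k+1)) hyge
        (neg_nonpos.mpr (Nat.cast_nonneg m))
    have hXpos : (0:ℝ) ≤ (-Real.log ‖y‖) ^ (a * 2) := (Real.rpow_pos_of_pos hlogpos _).le
    have hYpos : (0:ℝ) ≤ ‖y‖ ^ (-(m:ℝ)) := (Real.rpow_pos_of_pos hn0 _).le
    have hK2 : (0:ℝ) ≤ K ^ 2 := sq_nonneg K
    exact mul_le_mul (mul_le_mul_of_nonneg_left hXle hK2) hYle hYpos
      (by positivity)
  -- algebraic identity
  set C : ℝ := K ^ 2 * L2 ^ (a * 2) * 2 ^ (m:ℝ) with hCdef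
  have hBRk : ∀ k, B k * R k ^ m = C * ((k:ℝ) + 1) ^ (a * 2) := by
    intro k
    have hRk1 : R (k + 1) = R k * 2 ^ (-1 : ℝ) := by
      simp only [hRdef]
      push_cast
      rw [show -((k:ℝ)+1) = -(k:ℝ) + (-1) by ring, Real.rpow_add two_pos]
      ring
    have h1 : (R (k + 1)) ^ (-(m:ℝ)) = R k ^ (-(m:ℝ)) * 2 ^ (m:ℝ) := by
      rw [hRk1, Real.mul_rpow (hRpos k).le (by positivity)]
      congr 1
      rw [← Real.rpow_mul (by norm_num : (0:ℝ) ≤ 2)]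
      norm_num
    have h2 : (((k:ℝ) + 1) * L2) ^ (a * 2) = ((k:ℝ) + 1) ^ (a * 2) * L2 ^ (a * 2) :=
      Real.mul_rpow (by positivity) hL2pos.le
    have h3 : R k ^ m = R k ^ ((m:ℕ) : ℝ) := (Real.rpow_natCast _ _).symm
    have h4 : R k ^ (-(m:ℝ)) * R k ^ ((m:ℕ) : ℝ) = 1 := by
      rw [← Real.rpow_add (hRpos k)]
      push_cast
      rw [neg_add_cancel, Real.rpow_zero]
    calc B k * R k ^ m
        = K ^ 2 * ((((k:ℝ) + 1) * L2) ^ (a * 2)) * ((R (k+1)) ^ (-(m:ℝ))) * R k ^ ((m:ℕ):ℝ) := by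
          rw [hBdef, ← h3]
      _ = K ^ 2 * (((k:ℝ) + 1) ^ (a * 2) * L2 ^ (a * 2)) *
            (R k ^ (-(m:ℝ)) * 2 ^ (m:ℝ)) * R k ^ ((m:ℕ):ℝ) := by rw [h1, h2]
      _ = K ^ 2 * L2 ^ (a * 2) * 2 ^ (m:ℝ) * ((k:ℝ) + 1) ^ (a * 2) *
            (R k ^ (-(m:ℝ)) * R k ^ ((m:ℕ):ℝ)) := by ring
      _ = C * ((k:ℝ) + 1) ^ (a * 2) := by rw [h4, hCdef]; ring
  -- summability
  have hsummable : Summable (fun k : ℕ => C * ((k:ℝ) + 1) ^ (a * 2)) := by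
    have hbase : Summable (fun k : ℕ => ((k:ℝ)) ^ (a * 2)) :=
      Real.summable_nat_rpow.mpr (by linarith)
    have hshift : Summable (fun k : ℕ => (((k:ℕ) + 1 : ℕ) : ℝ) ^ (a * 2)) :=
      hbase.comp_injective Nat.succ_injective
    have : Summable (fun k : ℕ => ((k:ℝ) + 1) ^ (a * 2)) := by
      convert hshift using 2 with k
      push_cast
      ring
    exact this.mul_left C
  have htsum : (∑' k : ℕ, ENNReal.ofReal (B k * R k ^ m)) ≠ ⊤ := by
    have heq : ∀ k : ℕ, ENNReal.ofReal (B k * R k ^ m)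
        = ((C * ((k:ℝ) + 1) ^ (a * 2)).toNNReal : ENNReal) := by
      intro k
      rw [hBRk k]
      rfl
    rw [tsum_congr heq]
    exact ENNReal.tsum_coe_ne_top_iff_summable.mpr hsummable.toNNReal
  -- measurability
  have hmeasg : Measurable g := by
    have h1 : Measurable (fun y : E => gradient v y) :=
      ((InnerProductSpace.toDual ℝ E).symm.continuous.measurable).comp
        (measurable_fderiv ℝ v)
    exact (h1.norm).pow_const 2
  -- main estimate
  refine ⟨hmeasg.aestronglyMeasurable.restrict, ?_⟩
  rw [hasFiniteIntegral_iff_ofReal (Filter.Eventually.of_forall fun y => by positivity)]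
  have hμB1 : volume (Metric.ball (0:E) 1) < ⊤ := measure_ball_lt_top
  calc ∫⁻ y in s, ENNReal.ofReal (g y) ∂volume
      ≤ ∫⁻ y in s,
          ENNReal.ofReal ((K * (-Real.log ‖y‖) ^ a * ‖y‖ ^ (b - 1)) ^ 2) ∂volume := by
        apply setLIntegral_mono' hsm
        intro y hy
        apply ENNReal.ofReal_le_ofReal
        have h0 : 0 < ‖y‖ := by
          simp only [hsdef, Set.mem_diff, Set.mem_singleton_iff] at hy
          exact norm_pos_iff.mpr hy.2
        have h1 : ‖y‖ < 1/2 := by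
          have : ‖y‖ < r := by
            simpa [Metric.mem_ball, dist_zero_right] using hy.1
          linarith
        have := grad_norm_le m a b h0 h1
        calc g y = ‖gradient v y‖ ^ 2 := rfl
          _ ≤ (K * (-Real.log ‖y‖) ^ a * ‖y‖ ^ (b - 1)) ^ 2 := by
              apply pow_le_pow_left₀ (norm_nonneg _)
              simpa [hKdef, hvdef] using this
    _ ≤ ∫⁻ y in ⋃ k, A k,
          ENNReal.ofReal ((K * (-Real.log ‖y‖) ^ a * ‖y‖ ^ (b - 1)) ^ 2) ∂volume :=
        lintegral_mono_set hcover
    _ ≤ ∑' k : ℕ, ∫⁻ y in A k,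
          ENNReal.ofReal ((K * (-Real.log ‖y‖) ^ a * ‖y‖ ^ (b - 1)) ^ 2) ∂volume :=
        lintegral_iUnion_le _ _
    _ ≤ ∑' k : ℕ, ENNReal.ofReal (B k * R k ^ m) * volume (Metric.ball (0:E) 1) := by
        apply ENNReal.tsum_le_tsum
        intro k
        calc ∫⁻ y in A k,
              ENNReal.ofReal ((K * (-Real.log ‖y‖) ^ a * ‖y‖ ^ (b - 1)) ^ 2) ∂volume
            ≤ ∫⁻ _ in A k, ENNReal.ofReal (B k) ∂volume := by
              apply setLIntegral_mono' (hAm k)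
              intro y hy
              exact ENNReal.ofReal_le_ofReal (hpt k y hy)
          _ = ENNReal.ofReal (B k) * volume (A k) := setLIntegral_const _ _
          _ ≤ ENNReal.ofReal (B k) *
                (ENNReal.ofReal (R k ^ m) * volume (Metric.ball (0:E) 1)) := by
              apply mul_le_mul_right
              have : volume (A k) ≤ volume (Metric.ball (0:E) (R k)) :=
                measure_mono Set.diff_subset
              rw [Measure.addHaar_ball volume (0:E) (hRpos k).le,
                finrank_euclideanSpace_fin] at this
              exact this
          _ = ENNReal.ofReal (B k * R k ^ m) * volume (Metric.ball (0:E) 1) := by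
              rw [ENNReal.ofReal_mul (hB0 k), mul_assoc]
    _ = (∑' k : ℕ, ENNReal.ofReal (B k * R k ^ m)) * volume (Metric.ball (0:E) 1) :=
        ENNReal.tsum_mul_right
    _ < ⊤ := ENNReal.mul_lt_top (lt_top_iff_ne_top.mpr htsum) hμB1

end PerturbedGroundStateAux

open PerturbedGroundStateAux in
/-- The perturbed virtual ground state `v_a(y) = (-log ‖y‖)^a ‖y‖^{(2-m)/2}` is
smooth on `{0 < ‖y‖ < 1} ⊆ ℝ^m` and, for `a < -1/2` and `r ∈ (0,1/2)`, its
gradient is square integrable on `B_r \ {0}`. -/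
theorem perturbed_ground_state_gradient_L2 (m : ℕ) (hm : 3 ≤ m) (r : ℝ)
    (hr0 : 0 < r) (hr1 : r < 1 / 2) (a : ℝ) (ha : a < -(1 / 2 : ℝ)) :
    ContDiffOn ℝ (⊤ : ℕ∞)
      (fun y : EuclideanSpace ℝ (Fin m) =>
        (-Real.log ‖y‖) ^ a * ‖y‖ ^ (((2 : ℝ) - m) / 2))
      {y : EuclideanSpace ℝ (Fin m) | 0 < ‖y‖ ∧ ‖y‖ < 1} ∧
    IntegrableOn
      (fun y : EuclideanSpace ℝ (Fin m) =>
        ‖gradient (fun y : EuclideanSpace ℝ (Fin m) =>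
            (-Real.log ‖y‖) ^ a * ‖y‖ ^ (((2 : ℝ) - m) / 2)) y‖ ^ 2)
      (Metric.ball 0 r \ {0}) :=
  ⟨smooth_part m a (((2 : ℝ) - m) / 2), main_int m hm r hr0 hr1 a ha⟩
end

section
/- Let m ≥ 3 and k ≥ 1 be integers, let r ∈ (0,1), let D ⊆ ℝ^k be a measurable set, and let q : D → ℝ be measurable with 0 ≤ q(z) < 1 for all z ∈ D. Then there exists a constant C > 0, depending only on m, such that ∫_D ( ∫_{B_r} ‖y‖^{(m−2)√(1−q(z)) − m} dy ) dz ≤ C ∫_D (1 − q(z))^{−1/2} dz, where B_r = {y ∈ ℝ^m : ‖y‖ < r}. In particular, if ∫_D (1−q(z))^{−1/2} dz < ∞ then the double integral on the left is finite. -/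
open MeasureTheory Metric Set
open scoped ENNReal

/-! In polar coordinates, `∫_{B_r} ‖y‖^(a - m) dy = m |B_1| r^a / a` for `a > 0`. With
`a = (m - 2) √(1 - q(z))` and `r < 1` the inner integral is therefore at most
`m |B_1| / ((m - 2) √(1 - q(z)))`, and integrating this pointwise bound over `D` gives the claim
with `C = m |B_1| / (m - 2)`. -/

theorem lintegral_Ioo_rpow {a r : ℝ} (ha : -1 < a) (hr : 0 ≤ r) :
    ∫⁻ t in Ioo 0 r, ENNReal.ofReal (t ^ a) = ENNReal.ofReal (r ^ (a + 1) / (a + 1)) := by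
  rw [Measure.restrict_congr_set Ioo_ae_eq_Ioc,
    ← ofReal_integral_eq_lintegral_ofReal (intervalIntegral.intervalIntegrable_rpow' ha).1
      ((ae_restrict_iff' measurableSet_Ioc).2 <| .of_forall fun t ht ↦ Real.rpow_nonneg ht.1.le _),
    ← intervalIntegral.integral_of_le hr, integral_rpow (Or.inl ha),
    Real.zero_rpow (by linarith), sub_zero]

section Polar

variable {E : Type*} [NormedAddCommGroup E] [NormedSpace ℝ E] [FiniteDimensional ℝ E]
  [MeasurableSpace E] [BorelSpace E] [Nontrivial E] (μ : Measure E) [μ.IsAddHaarMeasure]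

theorem lintegral_fun_norm_addHaar {f : ℝ → ℝ≥0∞} (hf : Measurable f) :
    ∫⁻ x, f ‖x‖ ∂μ = Module.finrank ℝ E * μ (ball 0 1) *
      ∫⁻ y in Ioi 0, ENNReal.ofReal (y ^ (Module.finrank ℝ E - 1)) * f y := by
  have hf' : Measurable fun w : sphere (0 : E) 1 × Ioi (0 : ℝ) ↦ f w.2 :=
    hf.comp (measurable_subtype_coe.comp measurable_snd)
  calc ∫⁻ x, f ‖x‖ ∂μ = ∫⁻ x : ({0}ᶜ : Set E), f ‖x.1‖ ∂μ.comap (↑) := by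
        rw [lintegral_subtype_comap (measurableSet_singleton _).compl fun x ↦ f ‖x‖,
          restrict_compl_singleton]
    _ = ∫⁻ w, f w.2 ∂μ.toSphere.prod (.volumeIoiPow (Module.finrank ℝ E - 1)) := by
        rw [← μ.measurePreserving_homeomorphUnitSphereProd.map_eq,
          lintegral_map hf' (Homeomorph.measurable _)]
        simp only [homeomorphUnitSphereProd_apply_snd_coe]
    _ = μ.toSphere univ * ∫⁻ y, f y ∂.volumeIoiPow (Module.finrank ℝ E - 1) := by
        rw [lintegral_prod _ hf'.aemeasurable]
        simp [lintegral_const, mul_comm]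
    _ = _ := by
        rw [Measure.toSphere_apply_univ, Measure.volumeIoiPow,
          lintegral_withDensity_eq_lintegral_mul _
            (measurable_subtype_coe.pow_const _).ennreal_ofReal
            (show Measurable fun y : Ioi (0 : ℝ) ↦ f y from hf.comp measurable_subtype_coe)]
        exact congrArg _ (lintegral_subtype_comap measurableSet_Ioi
          fun y ↦ ENNReal.ofReal (y ^ (Module.finrank ℝ E - 1)) * f y)

theorem setLIntegral_ball_fun_norm_addHaar {f : ℝ → ℝ≥0∞} (hf : Measurable f) (r : ℝ) :
    ∫⁻ x in ball 0 r, f ‖x‖ ∂μ = Module.finrank ℝ E * μ (ball 0 1) *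
      ∫⁻ y in Ioo 0 r, ENNReal.ofReal (y ^ (Module.finrank ℝ E - 1)) * f y := by
  have hball : ball (0 : E) r = norm ⁻¹' Iio r := by ext; simp
  have := lintegral_fun_norm_addHaar μ (hf.indicator (measurableSet_Iio (a := r)))
  simp only [← indicator_comp_right, ← hball] at this
  rw [lintegral_indicator measurableSet_ball] at this
  refine this.trans ?_
  rw [← Iio_inter_Ioi, ← Measure.restrict_restrict measurableSet_Iio,
    ← lintegral_indicator measurableSet_Iio]
  simp only [indicator_mul_right]

theorem setLIntegral_ball_norm_rpow {p : ℝ} (hp : -(Module.finrank ℝ E : ℝ) < p) {r : ℝ}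
    (hr : 0 ≤ r) :
    ∫⁻ x in ball 0 r, ENNReal.ofReal (‖x‖ ^ p) ∂μ = Module.finrank ℝ E * μ (ball 0 1) *
      ENNReal.ofReal (r ^ (Module.finrank ℝ E + p) / (Module.finrank ℝ E + p)) := by
  have hdim : ((Module.finrank ℝ E - 1 : ℕ) : ℝ) = Module.finrank ℝ E - 1 :=
    Nat.cast_pred Module.finrank_pos
  rw [setLIntegral_ball_fun_norm_addHaar μ
      (by fun_prop : Measurable fun t : ℝ ↦ ENNReal.ofReal (t ^ p)),
    setLIntegral_congr_fun measurableSet_Ioo fun y hy ↦ by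
      rw [← ENNReal.ofReal_mul (pow_nonneg hy.1.le _), ← Real.rpow_natCast, hdim,
        ← Real.rpow_add hy.1],
    lintegral_Ioo_rpow (by linarith) hr]
  ring_nf

theorem setLIntegral_ball_norm_rpow_sub_finrank_le {a : ℝ} (ha : 0 < a) {r : ℝ} (hr₀ : 0 ≤ r)
    (hr₁ : r ≤ 1) :
    ∫⁻ x in ball 0 r, ENNReal.ofReal (‖x‖ ^ (a - Module.finrank ℝ E)) ∂μ ≤
      ENNReal.ofReal (Module.finrank ℝ E * μ.real (ball 0 1) / a) := by
  rw [setLIntegral_ball_norm_rpow μ (by linarith) hr₀, add_sub_cancel, mul_div_assoc,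
    ENNReal.ofReal_mul (by positivity), ENNReal.ofReal_natCast, Measure.real,
    ENNReal.ofReal_div_of_pos ha, ENNReal.ofReal_div_of_pos ha,
    ENNReal.ofReal_toReal measure_ball_lt_top.ne, mul_assoc, ← mul_div_assoc]
  gcongr
  exact mul_le_of_le_one_right' (ENNReal.ofReal_le_one.2 (Real.rpow_le_one hr₀ hr₁ ha.le))

end Polar

theorem supersolution_weighted_norm_upper_bound_general (m k : ℕ) (hm : 3 ≤ m) :
    ∃ C : ℝ, 0 < C ∧
      ∀ r : ℝ, 0 < r → r < 1 →
      ∀ D : Set (EuclideanSpace ℝ (Fin k)), MeasurableSet D →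
      ∀ q : EuclideanSpace ℝ (Fin k) → ℝ, Measurable q →
        (∀ z ∈ D, 0 ≤ q z ∧ q z < 1) →
        (∫⁻ z in D, ∫⁻ y in Metric.ball (0 : EuclideanSpace ℝ (Fin m)) r,
            ENNReal.ofReal (‖y‖ ^ (((m : ℝ) - 2) * Real.sqrt (1 - q z) - m))) ≤
          ENNReal.ofReal C * (∫⁻ z in D, ENNReal.ofReal ((1 - q z) ^ (-(1 / 2) : ℝ))) ∧
        ((∫⁻ z in D, ENNReal.ofReal ((1 - q z) ^ (-(1 / 2) : ℝ))) < ⊤ →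
          (∫⁻ z in D, ∫⁻ y in Metric.ball (0 : EuclideanSpace ℝ (Fin m)) r,
            ENNReal.ofReal (‖y‖ ^ (((m : ℝ) - 2) * Real.sqrt (1 - q z) - m))) < ⊤) := by
  have : NeZero m := ⟨by omega⟩
  have hm₂ : (0 : ℝ) < m - 2 := sub_pos.2 (by exact_mod_cast (by omega : 2 < m))
  set V := volume.real (ball (0 : EuclideanSpace ℝ (Fin m)) 1) with hV_def
  have hV : 0 < V := ENNReal.toReal_pos (measure_ball_pos _ _ one_pos).ne' measure_ball_lt_top.ne
  refine ⟨m * V / (m - 2), by positivity, fun r hr₀ hr₁ D hD q _ hq => ?_⟩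
  have hinner : ∀ z ∈ D,
      ∫⁻ y in ball (0 : EuclideanSpace ℝ (Fin m)) r,
          ENNReal.ofReal (‖y‖ ^ (((m : ℝ) - 2) * √(1 - q z) - m)) ≤
        ENNReal.ofReal (m * V / (m - 2)) * ENNReal.ofReal ((1 - q z) ^ (-(1 / 2) : ℝ)) := by
    intro z hz
    have hq₁ : 0 < 1 - q z := sub_pos.2 (hq z hz).2
    have hs : 0 < √(1 - q z) := Real.sqrt_pos.2 hq₁
    have hpolar := setLIntegral_ball_norm_rpow_sub_finrank_le (volume : Measure (EuclideanSpace ℝ (Fin m)))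
      (mul_pos hm₂ hs) hr₀.le hr₁.le
    rw [finrank_euclideanSpace_fin, ← hV_def] at hpolar
    refine hpolar.trans_eq ?_
    rw [← ENNReal.ofReal_mul (by positivity), Real.rpow_neg hq₁.le, ← Real.sqrt_eq_rpow]
    congr 1
    field_simp
  have hbound := (setLIntegral_mono' (μ := volume) hD hinner).trans_eq
    (lintegral_const_mul' _ _ ENNReal.ofReal_ne_top)
  exact ⟨hbound, fun h ↦ hbound.trans_lt (ENNReal.mul_lt_top ENNReal.ofReal_lt_top h)⟩

/-- Upper bound (flat model of Lemma 2.3): there is a constant `C > 0`,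
depending only on `m`, such that for every `r ∈ (0,1)`, every measurable
`D ⊆ ℝ^k` and every measurable `q : D → [0,1)`,
`∫_D ∫_{B_r} ‖y‖^{(m-2)√(1-q(z)) - m} dy dz ≤ C ∫_D (1-q(z))^{-1/2} dz`.
In particular, if `∫_D (1-q(z))^{-1/2} dz < ∞` then the double integral is
finite. -/
theorem supersolution_weighted_norm_upper_bound (m k : ℕ) (hm : 3 ≤ m) (hk : 1 ≤ k) :
    ∃ C : ℝ, 0 < C ∧
      ∀ r : ℝ, 0 < r → r < 1 →
      ∀ D : Set (EuclideanSpace ℝ (Fin k)), MeasurableSet D →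
      ∀ q : EuclideanSpace ℝ (Fin k) → ℝ, Measurable q →
        (∀ z ∈ D, 0 ≤ q z ∧ q z < 1) →
        (∫⁻ z in D, ∫⁻ y in Metric.ball (0 : EuclideanSpace ℝ (Fin m)) r,
            ENNReal.ofReal (‖y‖ ^ (((m : ℝ) - 2) * Real.sqrt (1 - q z) - m))) ≤
          ENNReal.ofReal C * (∫⁻ z in D, ENNReal.ofReal ((1 - q z) ^ (-(1 / 2) : ℝ))) ∧
        ((∫⁻ z in D, ENNReal.ofReal ((1 - q z) ^ (-(1 / 2) : ℝ))) < ⊤ →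
          (∫⁻ z in D, ∫⁻ y in Metric.ball (0 : EuclideanSpace ℝ (Fin m)) r,
            ENNReal.ofReal (‖y‖ ^ (((m : ℝ) - 2) * Real.sqrt (1 - q z) - m))) < ⊤) :=
  supersolution_weighted_norm_upper_bound_general m k hm
end

section
/- Let N ≥ 3 and 1 ≤ k ≤ N−2 be integers and set m = N−k. Define V(y,z) = ‖y‖^{(2+k−N)/2} ( 1 + (−log‖y‖)^{−1} ) on Ω = {(y,z) ∈ ℝ^m × ℝ^k : 0 < ‖y‖ < 1}. Then V > 0 on Ω and at every point of Ω, −ΔV − ((N−k−2)/2)² ‖y‖^{−2} V = −2 ‖y‖^{−2} (−log‖y‖)^{−3} ‖y‖^{(2+k−N)/2} ≤ 0; that is, V is a subsolution of the critical Hardy operator on Ω. -/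
open MeasureTheory

/-!
Work with `t = ‖y‖² = rhoYSq m x`, a quadratic form in `x`, so that `V = t ^ b φ(t)` with
`b = (2 + k - N) / 4` and `φ(t) = 1 - 2 / log t`. For a function `g(t)` the chain rule gives
`Δ(g ∘ t) = 4 t g''(t) + 2 m g'(t)`. Conjugating by the ground state `t ^ b`, where `m = 2 - 4b`,
cancels the Hardy term exactly: `Δ(t ^ b φ) + 4 b² t ^ b φ / t = 4 t ^ b (t φ')'`. For
`φ = 1 - 2 / log t` one has `t φ' = 2 / log² t`, whose derivative `-4 / (t log³ t)` is positive
on `0 < t < 1`.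
-/

open Filter Topology

noncomputable def rhoYSq (m : ℕ) {N : ℕ} (x : EuclideanSpace ℝ (Fin N)) : ℝ :=
  ∑ i : Fin N, if (i : ℕ) < m then x i ^ 2 else 0

section RhoYSq

variable (m : ℕ) {N : ℕ}

theorem rhoY_eq_sqrt_rhoYSq (x : EuclideanSpace ℝ (Fin N)) : rhoY m x = √(rhoYSq m x) := rfl

theorem rhoYSq_nonneg (x : EuclideanSpace ℝ (Fin N)) : 0 ≤ rhoYSq m x :=
  Finset.sum_nonneg fun i _ => by split <;> positivity

/-- `(v, w) ↦ 2 ⟨v_y, w_y⟩`: at `x` it is the derivative of `rhoYSq`, and it is also its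
Hessian. -/
noncomputable def rhoYSqForm :
    EuclideanSpace ℝ (Fin N) →L[ℝ] EuclideanSpace ℝ (Fin N) →L[ℝ] ℝ :=
  ∑ i ∈ Finset.univ.filter (fun i : Fin N => (i : ℕ) < m),
    ((2 : ℝ) • EuclideanSpace.proj i).smulRight (EuclideanSpace.proj i)

theorem rhoYSqForm_apply (v w : EuclideanSpace ℝ (Fin N)) :
    rhoYSqForm m v w = ∑ i : Fin N, if (i : ℕ) < m then 2 * v i * w i else 0 := by
  simp only [rhoYSqForm, _root_.sum_apply, Finset.sum_filter]
  exact Finset.sum_congr rfl fun i _ => by split_ifs <;> simp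

theorem rhoYSqForm_comm (v w : EuclideanSpace ℝ (Fin N)) :
    rhoYSqForm m v w = rhoYSqForm m w v := by
  simp only [rhoYSqForm_apply, mul_right_comm]

theorem rhoYSqForm_self (x : EuclideanSpace ℝ (Fin N)) :
    rhoYSqForm m x x = 2 * rhoYSq m x := by
  simp only [rhoYSqForm_apply, rhoYSq, Finset.mul_sum]
  exact Finset.sum_congr rfl fun i _ => by split_ifs <;> ring

theorem hasFDerivAt_rhoYSq (x : EuclideanSpace ℝ (Fin N)) :
    HasFDerivAt (rhoYSq m) (rhoYSqForm m x) x := by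
  have hf : rhoYSq m = fun y : EuclideanSpace ℝ (Fin N) => (1 / 2 : ℝ) * rhoYSqForm m y y := by
    funext y; rw [rhoYSqForm_self]; ring
  rw [hf]
  refine (((rhoYSqForm m).hasFDerivAt_of_bilinear (hasFDerivAt_id x)
    (hasFDerivAt_id x)).const_mul (1 / 2 : ℝ)).congr_fderiv ?_
  ext v
  simp only [one_div, id_eq, ContinuousLinearMap.precompR_apply, ContinuousLinearMap.compL_apply,
    ContinuousLinearMap.comp_id, smul_add, add_apply, smul_apply, smul_eq_mul,
    ContinuousLinearMap.precompL_apply, ContinuousLinearMap.id_apply, rhoYSqForm_comm m v x]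
  ring

theorem rhoYSqForm_single_right (v : EuclideanSpace ℝ (Fin N)) (i : Fin N) :
    rhoYSqForm m v (EuclideanSpace.single i 1) = if (i : ℕ) < m then 2 * v i else 0 := by
  rw [rhoYSqForm_apply, Finset.sum_eq_single i (fun j _ hj => by simp [hj]) (by simp)]
  simp

theorem sum_rhoYSqForm_single_sq (x : EuclideanSpace ℝ (Fin N)) :
    ∑ i, rhoYSqForm m x (EuclideanSpace.single i 1) ^ 2 = 4 * rhoYSq m x := by
  simp only [rhoYSqForm_single_right, rhoYSq, Finset.mul_sum]
  exact Finset.sum_congr rfl fun i _ => by split_ifs <;> ring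

theorem sum_rhoYSqForm_single_single (hm : m ≤ N) :
    ∑ i : Fin N, rhoYSqForm m (EuclideanSpace.single i 1) (EuclideanSpace.single i 1)
      = 2 * m := by
  simp only [rhoYSqForm_single_right, PiLp.single_apply, if_pos, mul_one]
  rw [← Finset.sum_filter, Finset.sum_const, Fin.card_filter_val_lt, min_eq_right hm,
    nsmul_eq_mul, mul_comm]

end RhoYSq

theorem iteratedFDeriv_two_comp_apply {E : Type*} [NormedAddCommGroup E] [NormedSpace ℝ E]
    {q : E → ℝ} {q' : E → E →L[ℝ] ℝ} {q'' : E →L[ℝ] E →L[ℝ] ℝ} {g g' : ℝ → ℝ} {g'' : ℝ}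
    {x : E} (hq : ∀ᶠ y in 𝓝 x, HasFDerivAt q (q' y) y) (hq' : HasFDerivAt q' q'' x)
    (hg : ∀ᶠ t in 𝓝 (q x), HasDerivAt g (g' t) t) (hg' : HasDerivAt g' g'' (q x)) (v : E) :
    iteratedFDeriv ℝ 2 (fun y => g (q y)) x ![v, v]
      = g'' * q' x v ^ 2 + g' (q x) * q'' v v := by
  have hD : fderiv ℝ (fun y => g (q y)) =ᶠ[𝓝 x] fun y => g' (q y) • q' y := by
    filter_upwards [hq, hq.self_of_nhds.continuousAt.eventually hg] with y hqy hgy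
    exact (hgy.comp_hasFDerivAt y hqy).fderiv
  have hD2 : HasFDerivAt (fun y => g' (q y) • q' y)
      (g' (q x) • q'' + (g'' • q' x).smulRight (q' x)) x :=
    (hg'.comp_hasFDerivAt x hq.self_of_nhds).smul hq'
  rw [iteratedFDeriv_two_apply, hD.fderiv_eq, hD2.fderiv]
  simp only [Matrix.cons_val_zero, Matrix.cons_val_one, Matrix.cons_val_fin_one, add_apply,
    smul_apply, ContinuousLinearMap.smulRight_apply, smul_eq_mul]
  ring

theorem lap_comp_rhoYSq {m N : ℕ} (hm : m ≤ N) {g g' : ℝ → ℝ} {g'' : ℝ}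
    {x : EuclideanSpace ℝ (Fin N)} (hg : ∀ᶠ t in 𝓝 (rhoYSq m x), HasDerivAt g (g' t) t)
    (hg' : HasDerivAt g' g'' (rhoYSq m x)) :
    lap (fun y => g (rhoYSq m y)) x = 4 * rhoYSq m x * g'' + 2 * m * g' (rhoYSq m x) := by
  simp only [lap, iteratedFDeriv_two_comp_apply (Eventually.of_forall (hasFDerivAt_rhoYSq m))
    (rhoYSqForm m).hasFDerivAt hg hg', Finset.sum_add_distrib, ← Finset.mul_sum,
    sum_rhoYSqForm_single_sq, sum_rhoYSqForm_single_single m hm]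
  ring

theorem lap_rpow_mul_comp_rhoYSq {m N : ℕ} (hm : m ≤ N) {b : ℝ} (hb : (m : ℝ) = 2 - 4 * b)
    {φ φ' : ℝ → ℝ} {φ'' : ℝ} {x : EuclideanSpace ℝ (Fin N)} (hx : 0 < rhoYSq m x)
    (hφ : ∀ᶠ t in 𝓝 (rhoYSq m x), HasDerivAt φ (φ' t) t)
    (hφ' : HasDerivAt φ' φ'' (rhoYSq m x)) :
    lap (fun y => rhoYSq m y ^ b * φ (rhoYSq m y)) x
        + 4 * b ^ 2 * (rhoYSq m x ^ b * φ (rhoYSq m x)) / rhoYSq m x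
      = 4 * rhoYSq m x ^ b * (φ' (rhoYSq m x) + rhoYSq m x * φ'') := by
  set t := rhoYSq m x
  have hg : ∀ᶠ s in 𝓝 t, HasDerivAt (fun s => s ^ b * φ s)
      (b * s ^ (b - 1) * φ s + s ^ b * φ' s) s := by
    filter_upwards [hφ, Ioi_mem_nhds hx] with s hφs hs
    exact (Real.hasDerivAt_rpow_const (Or.inl hs.ne')).mul hφs
  have hg' : HasDerivAt (fun s => b * s ^ (b - 1) * φ s + s ^ b * φ' s)
      (b * ((b - 1) * t ^ (b - 1 - 1)) * φ t + b * t ^ (b - 1) * φ' t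
        + (b * t ^ (b - 1) * φ' t + t ^ b * φ'')) t :=
    (((Real.hasDerivAt_rpow_const (Or.inl hx.ne')).const_mul b).mul hφ.self_of_nhds).add
      ((Real.hasDerivAt_rpow_const (Or.inl hx.ne')).mul hφ')
  rw [lap_comp_rhoYSq hm hg hg', hb, Real.rpow_sub hx, Real.rpow_sub hx, Real.rpow_one]
  field_simp
  ring

theorem hasDerivAt_one_sub_two_div_log {t : ℝ} (ht : 0 < t) (ht1 : t ≠ 1) :
    HasDerivAt (fun s => 1 - 2 / Real.log s) (2 / (t * Real.log t ^ 2)) t := by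
  have hL : Real.log t ≠ 0 := Real.log_ne_zero_of_pos_of_ne_one ht ht1
  refine (((hasDerivAt_const t (2 : ℝ)).fun_div (Real.hasDerivAt_log ht.ne') hL).const_sub 1
    ).congr_deriv ?_
  field_simp
  ring

theorem hasDerivAt_two_div_mul_log_sq {t : ℝ} (ht : 0 < t) (ht1 : t ≠ 1) :
    HasDerivAt (fun s => 2 / (s * Real.log s ^ 2))
      (-2 * (Real.log t + 2) / (t ^ 2 * Real.log t ^ 3)) t := by
  have hL : Real.log t ≠ 0 := Real.log_ne_zero_of_pos_of_ne_one ht ht1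
  refine ((hasDerivAt_const t (2 : ℝ)).fun_div ((hasDerivAt_id' t).fun_mul
    ((Real.hasDerivAt_log ht.ne').fun_pow 2)) (by positivity)).congr_deriv ?_
  field_simp
  ring

theorem lap_rhoYSq_rpow_mul_one_sub_two_div_log {m N : ℕ} (hm : m ≤ N) {b : ℝ}
    (hb : (m : ℝ) = 2 - 4 * b) {x : EuclideanSpace ℝ (Fin N)} (hx : 0 < rhoYSq m x)
    (hx1 : rhoYSq m x ≠ 1) :
    lap (fun y => rhoYSq m y ^ b * (1 - 2 / Real.log (rhoYSq m y))) x
        + 4 * b ^ 2 * (rhoYSq m x ^ b * (1 - 2 / Real.log (rhoYSq m x))) / rhoYSq m x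
      = -16 * rhoYSq m x ^ b / (rhoYSq m x * Real.log (rhoYSq m x) ^ 3) := by
  have hφ : ∀ᶠ s in 𝓝 (rhoYSq m x),
      HasDerivAt (fun s => 1 - 2 / Real.log s) (2 / (s * Real.log s ^ 2)) s := by
    filter_upwards [Ioi_mem_nhds hx, isOpen_ne.mem_nhds hx1] with s hs hs1
    exact hasDerivAt_one_sub_two_div_log hs hs1
  rw [lap_rpow_mul_comp_rhoYSq hm hb hx hφ (hasDerivAt_two_div_mul_log_sq hx hx1)]
  have hL : Real.log (rhoYSq m x) ≠ 0 := Real.log_ne_zero_of_pos_of_ne_one hx hx1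
  field_simp
  ring

theorem sqrt_rpow_mul_one_add_inv_neg_log {t : ℝ} (ht : 0 ≤ t) (e : ℝ) :
    √t ^ e * (1 + (-Real.log √t)⁻¹) = t ^ (e / 2) * (1 - 2 / Real.log t) := by
  rw [Real.log_sqrt ht, Real.rpow_div_two_eq_sqrt e ht, inv_neg, inv_div]
  ring

theorem critical_hardy_subsolution_general (N k m : ℕ)
    (hk2 : k ≤ N - 2) (hm : m = N - k) :
    (∀ x : EuclideanSpace ℝ (Fin N), 0 < rhoY m x → rhoY m x < 1 →
      0 < rhoY m x ^ (((2 : ℝ) + k - N) / 2) * (1 + (-Real.log (rhoY m x))⁻¹)) ∧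
    (∀ x : EuclideanSpace ℝ (Fin N), 0 < rhoY m x → rhoY m x < 1 →
      -lap (fun x : EuclideanSpace ℝ (Fin N) =>
            rhoY m x ^ (((2 : ℝ) + k - N) / 2) * (1 + (-Real.log (rhoY m x))⁻¹)) x
        - (((N : ℝ) - k - 2) / 2) ^ 2 *
            (rhoY m x ^ (((2 : ℝ) + k - N) / 2) * (1 + (-Real.log (rhoY m x))⁻¹))
              / (rhoY m x) ^ 2 =
        -(2 * ((-Real.log (rhoY m x))⁻¹) ^ 3 * rhoY m x ^ (((2 : ℝ) + k - N) / 2)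
          / (rhoY m x) ^ 2) ∧
      -(2 * ((-Real.log (rhoY m x))⁻¹) ^ 3 * rhoY m x ^ (((2 : ℝ) + k - N) / 2)
          / (rhoY m x) ^ 2) ≤ 0) := by
  refine ⟨fun x hρ hρ1 => ?_, fun x hρ hρ1 => ⟨?_, ?_⟩⟩
  · have hL : 0 < (-Real.log (rhoY m x))⁻¹ := inv_pos.2 (neg_pos.2 (Real.log_neg hρ hρ1))
    exact mul_pos (Real.rpow_pos_of_pos hρ _) (by linarith)
  · have hmR : (m : ℝ) = 2 - 4 * ((((2 : ℝ) + k - N) / 2) / 2) := by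
      rw [hm, Nat.cast_sub (by omega)]; ring
    have ht : 0 < rhoYSq m x := Real.sqrt_pos.1 hρ
    have ht1 : rhoYSq m x ≠ 1 := fun h => by
      rw [rhoY_eq_sqrt_rhoYSq, h, Real.sqrt_one] at hρ1; exact hρ1.false
    have hlap := lap_rhoYSq_rpow_mul_one_sub_two_div_log (by omega) hmR ht ht1
    simp only [rhoY_eq_sqrt_rhoYSq, sqrt_rpow_mul_one_add_inv_neg_log (rhoYSq_nonneg m _)]
    rw [Real.log_sqrt (rhoYSq_nonneg m x), Real.sq_sqrt (rhoYSq_nonneg m x),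
      ← Real.rpow_div_two_eq_sqrt _ (rhoYSq_nonneg m x)]
    linear_combination -hlap
  · have hL : 0 ≤ (-Real.log (rhoY m x))⁻¹ :=
      inv_nonneg.2 (neg_nonneg.2 (Real.log_nonpos hρ.le hρ1.le))
    exact neg_nonpos.2 (div_nonneg (mul_nonneg (mul_nonneg two_pos.le (pow_nonneg hL 3))
      (Real.rpow_nonneg hρ.le _)) (sq_nonneg _))

/-- The subsolution `V = v₋₁ + v₀`, i.e.
`V(y,z) = ‖y‖^{(2+k-N)/2} (1 + (-log ‖y‖)⁻¹)`, of the critical Hardy operator: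
`V > 0` on `Ω = {0 < ‖y‖ < 1}` and there
`-ΔV - ((N-k-2)/2)² ‖y‖⁻² V = -2 ‖y‖⁻² (-log ‖y‖)⁻³ ‖y‖^{(2+k-N)/2} ≤ 0`. -/
theorem critical_hardy_subsolution (N k m : ℕ) (hN : 3 ≤ N) (hk1 : 1 ≤ k)
    (hk2 : k ≤ N - 2) (hm : m = N - k) :
    (∀ x : EuclideanSpace ℝ (Fin N), 0 < rhoY m x → rhoY m x < 1 →
      0 < rhoY m x ^ (((2 : ℝ) + k - N) / 2) * (1 + (-Real.log (rhoY m x))⁻¹)) ∧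
    (∀ x : EuclideanSpace ℝ (Fin N), 0 < rhoY m x → rhoY m x < 1 →
      -lap (fun x : EuclideanSpace ℝ (Fin N) =>
            rhoY m x ^ (((2 : ℝ) + k - N) / 2) * (1 + (-Real.log (rhoY m x))⁻¹)) x
        - (((N : ℝ) - k - 2) / 2) ^ 2 *
            (rhoY m x ^ (((2 : ℝ) + k - N) / 2) * (1 + (-Real.log (rhoY m x))⁻¹))
              / (rhoY m x) ^ 2 =
        -(2 * ((-Real.log (rhoY m x))⁻¹) ^ 3 * rhoY m x ^ (((2 : ℝ) + k - N) / 2)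
          / (rhoY m x) ^ 2) ∧
      -(2 * ((-Real.log (rhoY m x))⁻¹) ^ 3 * rhoY m x ^ (((2 : ℝ) + k - N) / 2)
          / (rhoY m x) ^ 2) ≤ 0) :=
  critical_hardy_subsolution_general N k m hk2 hm
end
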